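/- arXiv:2011.03245 — 9 statements merged into one kernel-verified Lean document; each statement's English description precedes it below -/
import Mathlib

section
/- Let A be a complex C*-algebra and let a, b ∈ A with a ≠ 0. Then lim_{t→0⁺} (‖a + t·b‖ − ‖a‖)/t = (1/‖a‖) · lim_{t→0⁺} (‖a* a + t·a* b‖ − ‖a* a‖)/t. -/
/-!
Write `D(b)` for the right derivative of the norm at `a` in direction `b`, and `L(b)` for the one
at `a⋆a` in direction `a⋆b`. Since `a⋆a + t a⋆b = a⋆(a + t b)`, submultiplicativity gives
`L(b) ≤ ‖a‖ D(b)`. Conversely, the C⋆-identity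
`‖a + t b‖² = ‖(a + t b)⋆(a + t b)‖ ≤ ‖a⋆(a + t b)‖ + t ‖b‖ ‖a + t b‖` gives
`2 ‖a‖ D(b) ≤ L(b) + ‖a‖ ‖b‖`. This is too weak by itself, but replacing `b` by `b + s a` raises
`D` by `s ‖a‖` and `L` by `s ‖a‖²`, turning it into `2 ‖a‖ D(b) ≤ L(b) + ‖a‖ (‖b + s a‖ - s ‖a‖)`,
and the bracket tends to `D(b)` as `s → ∞`.
-/

open Filter Set Topology

section NormedSpace

variable {E : Type*} [SeminormedAddCommGroup E] [NormedSpace ℝ E]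

noncomputable def normRightDeriv (v u : E) : ℝ :=
  derivWithin (fun t : ℝ => ‖v + t • u‖) (Ioi 0) 0

lemma convexOn_norm_add_smul (v u : E) : ConvexOn ℝ univ (fun t : ℝ => ‖v + t • u‖) :=
  convexOn_univ_norm.comp_affineMap (AffineMap.lineMap v (v + u))
    |>.congr fun t _ => by simp [AffineMap.lineMap_apply, add_comm]

lemma tendsto_normRightDeriv (v u : E) :
    Tendsto (fun t : ℝ => (‖v + t • u‖ - ‖v‖) / t) (𝓝[>] 0) (𝓝 (normRightDeriv v u)) := by
  have h := (convexOn_norm_add_smul v u).hasDerivWithinAt_rightDeriv_of_mem_interior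
    (x := 0) (by simp)
  refine ((hasDerivWithinAt_iff_tendsto_slope' (lt_irrefl 0)).1 h).congr fun t => ?_
  simp [slope_def_field]

lemma tendsto_norm_add_smul_sub_atTop (v u : E) :
    Tendsto (fun r : ℝ => ‖u + r • v‖ - r * ‖v‖) atTop (𝓝 (normRightDeriv v u)) := by
  refine ((tendsto_normRightDeriv v u).comp tendsto_inv_atTop_nhdsGT_zero).congr' ?_
  filter_upwards [eventually_gt_atTop 0] with r hr
  have hscale : u + r • v = r • (v + r⁻¹ • u) := by
    rw [smul_add, smul_smul, mul_inv_cancel₀ hr.ne', one_smul, add_comm]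
  rw [Function.comp_apply, hscale, norm_smul, Real.norm_of_nonneg hr.le]
  field_simp

lemma normRightDeriv_add_smul (v u : E) (s : ℝ) :
    normRightDeriv v (u + s • v) = normRightDeriv v u + s * ‖v‖ := by
  refine tendsto_nhds_unique (tendsto_norm_add_smul_sub_atTop v (u + s • v)) ?_
  refine (((tendsto_norm_add_smul_sub_atTop v u).comp
    (tendsto_atTop_add_const_right _ s tendsto_id)).add_const (s * ‖v‖)).congr fun r => ?_
  simp only [Function.comp_apply, id, add_assoc, ← add_smul, add_comm s r]
  ring

end NormedSpace

section CStarRing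

variable {A : Type*} [NormedRing A] [StarRing A] [CStarRing A] [NormedAlgebra ℝ A]

lemma norm_add_smul_mul_self_le (a b : A) {t : ℝ} (ht : 0 ≤ t) :
    ‖a + t • b‖ * ‖a + t • b‖ ≤ ‖star a * a + t • (star a * b)‖ + t * ‖b‖ * ‖a + t • b‖ :=
  calc ‖a + t • b‖ * ‖a + t • b‖ = ‖star a * (a + t • b) + star (t • b) * (a + t • b)‖ := by
        rw [← add_mul, ← star_add, CStarRing.norm_star_mul_self]
  _ ≤ ‖star a * (a + t • b)‖ + ‖star (t • b)‖ * ‖a + t • b‖ :=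
        (norm_add_le _ _).trans (add_le_add_right (norm_mul_le _ _) _)
  _ = ‖star a * a + t • (star a * b)‖ + t * ‖b‖ * ‖a + t • b‖ := by
        rw [mul_add, mul_smul_comm, norm_star, norm_smul, Real.norm_of_nonneg ht]

lemma normRightDeriv_star_mul_le (a b : A) :
    normRightDeriv (star a * a) (star a * b) ≤ ‖a‖ * normRightDeriv a b := by
  refine le_of_tendsto_of_tendsto (tendsto_normRightDeriv _ _)
    ((tendsto_normRightDeriv a b).const_mul ‖a‖) ?_
  filter_upwards [self_mem_nhdsWithin] with t (ht : 0 < t)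
  have hle : ‖star a * a + t • (star a * b)‖ ≤ ‖a‖ * ‖a + t • b‖ := by
    rw [← mul_smul_comm, ← mul_add, ← norm_star a]
    exact norm_mul_le _ _
  rw [CStarRing.norm_star_mul_self, mul_div_assoc', mul_sub]
  gcongr

lemma two_mul_norm_mul_normRightDeriv_le (a b : A) :
    2 * ‖a‖ * normRightDeriv a b ≤ normRightDeriv (star a * a) (star a * b) + ‖a‖ * ‖b‖ := by
  have hcont : Tendsto (fun t : ℝ => ‖a + t • b‖) (𝓝[>] 0) (𝓝 ‖a‖) := by
    have h : Continuous fun t : ℝ => ‖a + t • b‖ := by fun_prop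
    simpa using (h.tendsto 0).mono_left nhdsWithin_le_nhds
  have hle : normRightDeriv a b * (‖a‖ + ‖a‖) ≤
      normRightDeriv (star a * a) (star a * b) + ‖b‖ * ‖a‖ := by
    refine le_of_tendsto_of_tendsto ((tendsto_normRightDeriv a b).mul (hcont.add_const ‖a‖))
      ((tendsto_normRightDeriv _ _).add (hcont.const_mul ‖b‖)) ?_
    filter_upwards [self_mem_nhdsWithin] with t (ht : 0 < t)
    have h := norm_add_smul_mul_self_le a b ht.le
    rw [CStarRing.norm_star_mul_self, div_mul_eq_mul_div, div_add' _ _ _ ht.ne', div_le_div_iff_of_pos_right ht]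
    nlinarith
  linarith

lemma norm_mul_normRightDeriv_le (a b : A) :
    ‖a‖ * normRightDeriv a b ≤ normRightDeriv (star a * a) (star a * b) := by
  have hshift (s : ℝ) : 2 * ‖a‖ * normRightDeriv a b ≤
      normRightDeriv (star a * a) (star a * b) + ‖a‖ * (‖b + s • a‖ - s * ‖a‖) := by
    have h := two_mul_norm_mul_normRightDeriv_le a (b + s • a)
    rw [mul_add, mul_smul_comm, normRightDeriv_add_smul, normRightDeriv_add_smul,
      CStarRing.norm_star_mul_self] at h
    linarith
  have hlim := ((tendsto_norm_add_smul_sub_atTop a b).const_mul ‖a‖).const_add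
    (normRightDeriv (star a * a) (star a * b))
  linarith [ge_of_tendsto' hlim hshift]

lemma normRightDeriv_star_mul (a b : A) :
    normRightDeriv (star a * a) (star a * b) = ‖a‖ * normRightDeriv a b :=
  (normRightDeriv_star_mul_le a b).antisymm (norm_mul_normRightDeriv_le a b)

end CStarRing

theorem gateaux_derivative_reduction_to_positive_general
    {A : Type*} [NormedRing A] [StarRing A] [CStarRing A]
    [NormedAlgebra ℂ A]
    (a b : A) (ha : a ≠ 0) :
    ∃ L : ℝ,
      Tendsto (fun t : ℝ => (‖star a * a + t • (star a * b)‖ - ‖star a * a‖) / t)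
        (nhdsWithin 0 (Set.Ioi 0)) (nhds L) ∧
      Tendsto (fun t : ℝ => (‖a + t • b‖ - ‖a‖) / t)
        (nhdsWithin 0 (Set.Ioi 0)) (nhds ((1 / ‖a‖) * L)) := by
  refine ⟨_, tendsto_normRightDeriv _ _, ?_⟩
  rw [normRightDeriv_star_mul, one_div, inv_mul_cancel_left₀ (norm_ne_zero_iff.2 ha)]
  exact tendsto_normRightDeriv a b

/-- For `a ≠ 0` and `b` in a complex C*-algebra,
`lim_{t→0⁺} (‖a + t b‖ - ‖a‖)/t = (1/‖a‖) · lim_{t→0⁺} (‖a*a + t a*b‖ - ‖a*a‖)/t`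
(both one-sided limits exist). -/
theorem gateaux_derivative_reduction_to_positive
    {A : Type*} [NormedRing A] [StarRing A] [CStarRing A]
    [NormedAlgebra ℂ A] [StarModule ℂ A] [CompleteSpace A]
    (a b : A) (ha : a ≠ 0) :
    ∃ L : ℝ,
      Tendsto (fun t : ℝ => (‖star a * a + t • (star a * b)‖ - ‖star a * a‖) / t)
        (nhdsWithin 0 (Set.Ioi 0)) (nhds L) ∧
      Tendsto (fun t : ℝ => (‖a + t • b‖ - ‖a‖) / t)
        (nhdsWithin 0 (Set.Ioi 0)) (nhds ((1 / ‖a‖) * L)) :=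
  gateaux_derivative_reduction_to_positive_general a b ha
end

section
/- Let A be a complex C*-algebra, let f be a bounded linear functional on A of norm one, and suppose there exists a nonzero a ∈ A with f(a* a) = ‖a* a‖. Then f is a state on A, i.e. f is positive. -/
/-!
Extend `f` by Hahn–Banach to a functional `F` of norm at most one on the unitization.
The spectrum of `b = a⋆a` lies in `[0, ‖b‖]`, so `‖b - ‖b‖ / 2‖ ≤ ‖b‖ / 2`; hence `F b = ‖b‖`
forces `‖2 - F 1‖ ≤ 1`, which together with `‖F 1‖ ≤ 1` gives `F 1 = 1`.
A contractive functional with `F 1 = 1` is positive: for self-adjoint `s` and real `t`,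
`‖F s + it‖² ≤ ‖s + it‖² ≤ ‖s‖² + t²` makes `F s` real, and for positive `b`,
`‖F b - ‖b‖‖ ≤ ‖b - ‖b‖‖ ≤ ‖b‖` makes it nonnegative.
-/

open ComplexOrder

theorem LinearIsometry.exists_extension_norm_eq {𝕜 E F : Type*} [RCLike 𝕜]
    [NormedAddCommGroup E] [NormedSpace 𝕜 E] [NormedAddCommGroup F] [NormedSpace 𝕜 F]
    (e : E →ₗᵢ[𝕜] F) (f : StrongDual 𝕜 E) :
    ∃ g : StrongDual 𝕜 F, (∀ x, g (e x) = f x) ∧ ‖g‖ = ‖f‖ := by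
  obtain ⟨g, hg, hgf⟩ := _root_.exists_extension_norm_eq _
    (f.comp e.equivRange.symm.toContinuousLinearEquiv.toContinuousLinearMap)
  refine ⟨g, fun x => ?_, hgf.trans (f.opNorm_comp_linearIsometryEquiv _)⟩
  simpa using hg (e.equivRange x)

lemma Complex.eq_one_of_norm_le_one_of_norm_two_sub_le_one {z : ℂ} (h₁ : ‖z‖ ≤ 1)
    (h₂ : ‖2 - z‖ ≤ 1) : z = 1 := by
  have h₁' := Complex.sq_norm z ▸ pow_le_one₀ (norm_nonneg _) h₁
  have h₂' := Complex.sq_norm (2 - z) ▸ pow_le_one₀ (norm_nonneg _) h₂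
  simp only [Complex.normSq_apply, Complex.sub_re, Complex.sub_im] at h₁' h₂'
  norm_num at h₂'
  apply Complex.ext <;> simp <;> nlinarith

section CStarAlgebra

variable {B : Type*} [CStarAlgebra B]

lemma ContinuousLinearMap.apply_algebraMap (F : B →L[ℂ] ℂ) (r : ℝ) :
    F (algebraMap ℝ B r) = r * F 1 := by
  rw [Algebra.algebraMap_eq_smul_one, ← Complex.coe_smul, map_smul, smul_eq_mul]

variable [Nontrivial B]

lemma CStarAlgebra.norm_sub_algebraMap_le_of_nonneg [PartialOrder B] [StarOrderedRing B]
    {b : B} (hb : 0 ≤ b) {r : ℝ} (hr : ‖b‖ ≤ 2 * r) : ‖b - algebraMap ℝ B r‖ ≤ r := by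
  have hr₀ : 0 ≤ r := by linarith [norm_nonneg b]
  rw [← cfc_id' ℝ b, ← cfc_const r b, ← cfc_sub (fun t : ℝ => t) (fun _ : ℝ => r) b]
  refine norm_cfc_le hr₀ fun t ht => ?_
  have ht₀ : 0 ≤ t := spectrum_nonneg_of_nonneg hb ht
  have htb : t ≤ ‖b‖ := by
    simpa [Real.norm_of_nonneg ht₀] using spectrum.norm_le_norm_of_mem ht
  rw [Real.norm_eq_abs, abs_le]
  constructor <;> linarith

lemma IsSelfAdjoint.norm_add_smul_I_sq_le {s : B} (hs : IsSelfAdjoint s) (t : ℝ) :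
    ‖s + (t * Complex.I) • (1 : B)‖ ^ 2 ≤ ‖s‖ ^ 2 + t ^ 2 := by
  have hconj : star ((t : ℂ) * Complex.I) = -(t * Complex.I) := by simp
  have key : star (s + (t * Complex.I) • (1 : B)) * (s + (t * Complex.I) • 1)
      = s * s + (t ^ 2 : ℝ) • 1 := by
    rw [star_add, star_smul, star_one, hs.star_eq, hconj]
    simp only [add_mul, mul_add, smul_mul_assoc, mul_smul_comm, one_mul, mul_one, smul_add,
      smul_smul, ← Complex.coe_smul]
    have : (t * Complex.I) * -(t * Complex.I) = ((t ^ 2 : ℝ) : ℂ) := by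
      push_cast; ring_nf; simp
    rw [this, neg_smul]
    abel
  calc ‖s + (t * Complex.I) • (1 : B)‖ ^ 2 = ‖s * s + (t ^ 2 : ℝ) • (1 : B)‖ := by
        rw [sq, ← CStarRing.norm_star_mul_self, key]
    _ ≤ ‖s * s‖ + ‖(t ^ 2 : ℝ) • (1 : B)‖ := norm_add_le _ _
    _ = ‖s‖ ^ 2 + t ^ 2 := by
        rw [hs.norm_mul_self, norm_smul, norm_one]
        simp [sq]

namespace ContinuousLinearMap

variable {F : B →L[ℂ] ℂ}

lemma norm_apply_sub_algebraMap_le [PartialOrder B] [StarOrderedRing B] (hF : ‖F‖ ≤ 1)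
    {b : B} (hb : 0 ≤ b) {r : ℝ} (hr : ‖b‖ ≤ 2 * r) : ‖F (b - algebraMap ℝ B r)‖ ≤ r :=
  ((F.le_of_opNorm_le hF _).trans_eq (one_mul _)).trans
    (CStarAlgebra.norm_sub_algebraMap_le_of_nonneg hb hr)

lemma apply_one_eq_one_of_apply_eq_norm [PartialOrder B] [StarOrderedRing B] (hF : ‖F‖ ≤ 1)
    {b : B} (hb : 0 ≤ b) (hb₀ : b ≠ 0) (hFb : F b = ‖b‖) : F 1 = 1 := by
  set r := ‖b‖ / 2
  have hr : 0 < r := by have := norm_pos_iff.2 hb₀; positivity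
  have hbr : (‖b‖ : ℂ) = r * 2 := by simp [r]
  have h := norm_apply_sub_algebraMap_le hF hb (r := r) (mul_div_cancel₀ _ two_ne_zero).ge
  rw [map_sub, hFb, apply_algebraMap, hbr, ← mul_sub, norm_mul, Complex.norm_real,
    Real.norm_of_nonneg hr.le] at h
  refine Complex.eq_one_of_norm_le_one_of_norm_two_sub_le_one ?_ ?_
  · simpa using F.le_of_opNorm_le hF 1
  · exact (mul_le_iff_le_one_right hr).1 h

lemma im_apply_eq_zero_of_isSelfAdjoint (hF : ‖F‖ ≤ 1) (hF₁ : F 1 = 1) {s : B}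
    (hs : IsSelfAdjoint s) : (F s).im = 0 := by
  have bound (t : ℝ) : (F s).re ^ 2 + ((F s).im + t) ^ 2 ≤ ‖s‖ ^ 2 + t ^ 2 := by
    have h := F.le_of_opNorm_le hF (s + (t * Complex.I) • 1)
    rw [map_add, map_smul, hF₁, smul_eq_mul, mul_one, one_mul] at h
    have := (pow_le_pow_left₀ (norm_nonneg _) h 2).trans (hs.norm_add_smul_I_sq_le t)
    rw [Complex.sq_norm, Complex.normSq_apply] at this
    simpa [sq] using this
  by_contra hne
  -- take `t` with `2 (F s).im t = ‖s‖²`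
  have ht := mul_div_cancel₀ (‖s‖ ^ 2) (mul_ne_zero two_ne_zero hne)
  nlinarith [bound (‖s‖ ^ 2 / (2 * (F s).im)), sq_nonneg (F s).re, sq_pos_of_ne_zero hne]

lemma apply_nonneg_of_nonneg [PartialOrder B] [StarOrderedRing B] (hF : ‖F‖ ≤ 1)
    (hF₁ : F 1 = 1) {b : B} (hb : 0 ≤ b) : 0 ≤ F b := by
  have h := norm_apply_sub_algebraMap_le hF hb (r := ‖b‖) (by linarith [norm_nonneg b])
  rw [map_sub, apply_algebraMap, hF₁, mul_one] at h
  have hre := (Complex.abs_re_le_norm _).trans h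
  rw [Complex.sub_re, Complex.ofReal_re, abs_le] at hre
  exact Complex.nonneg_iff.2
    ⟨by linarith, (im_apply_eq_zero_of_isSelfAdjoint hF hF₁ hb.isSelfAdjoint).symm⟩

end ContinuousLinearMap

end CStarAlgebra

/-- A norm-one bounded linear functional `f` on a complex C*-algebra which satisfies
`f(a* a) = ‖a* a‖` for some nonzero `a` is positive, hence a state. -/
theorem norm_one_functional_attaining_on_positive_is_state
    {A : Type*} [NormedRing A] [StarRing A] [CStarRing A]
    [NormedAlgebra ℂ A] [StarModule ℂ A] [CompleteSpace A]
    (f : A →L[ℂ] ℂ) (hf : ‖f‖ = 1)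
    (a : A) (ha : a ≠ 0) (hfa : f (star a * a) = (‖star a * a‖ : ℂ)) :
    ∀ x : A, 0 ≤ f (star x * x) := by
  let _ : NonUnitalCStarAlgebra A := {}
  let ι : A →ₗᵢ[ℂ] Unitization ℂ A :=
    { Unitization.inrHom ℂ ℂ A with norm_map' := Unitization.norm_inr }
  have hι (x : A) : ι (star x * x) = star (x : Unitization ℂ A) * x := by
    change ((star x * x : A) : Unitization ℂ A) = _
    rw [Unitization.inr_mul, Unitization.inr_star]
  obtain ⟨F, hFf, hFnorm⟩ := ι.exists_extension_norm_eq f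
  have hF : ‖F‖ ≤ 1 := (hFnorm.trans hf).le
  have hF₁ : F 1 = 1 := by
    refine F.apply_one_eq_one_of_apply_eq_norm hF (b := ι (star a * a)) ?_ ?_ ?_
    · exact hι a ▸ star_mul_self_nonneg _
    · exact (map_ne_zero_iff ι ι.injective).2 ((CStarRing.star_mul_self_ne_zero_iff a).2 ha)
    · rw [hFf, hfa, ι.norm_map]
  intro x
  rw [← hFf, hι]
  exact F.apply_nonneg_of_nonneg hF hF₁ (star_mul_self_nonneg _)
end

section
/- Let A be a complex C*-algebra, let a ∈ A, and let B be a linear subspace of A. Then a is Birkhoff–James orthogonal to B if and only if a* a is Birkhoff–James orthogonal to the subspace a* B = { a* b : b ∈ B }. -/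
/-!
If `‖a‖ ≤ ‖a + t b‖` for all real `t`, the C*-identity gives
`‖a⋆a‖ ≤ ‖a⋆a + 2t ℜ(a⋆b) + t² b⋆b‖`. Since `t ↦ ‖a⋆a + t ℜ(a⋆b)‖` is convex, an error of
order `t²` as `t → 0⁺` is invisible, so `‖a⋆a‖ ≤ ‖a⋆a + ℜ(a⋆b)‖ = ‖ℜ(a⋆a + a⋆b)‖ ≤ ‖a⋆a + a⋆b‖`.
Conversely `‖a‖² = ‖a⋆a‖ ≤ ‖a⋆(a + b)‖ ≤ ‖a‖ ‖a + b‖`.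
-/

open Filter Topology ComplexStarModule

theorem norm_le_norm_add_of_eventually_le_add_sq {E : Type*} [SeminormedAddCommGroup E]
    [NormedSpace ℝ E] {p h : E} {C : ℝ}
    (hp : ∀ᶠ t in 𝓝[>] (0 : ℝ), ‖p‖ ≤ ‖p + t • h‖ + C * t ^ 2) :
    ‖p‖ ≤ ‖p + h‖ := by
  have hlim : Tendsto (fun t : ℝ => ‖p + h‖ + C * t) (𝓝[>] 0) (𝓝 ‖p + h‖) := by
    refine ((by fun_prop : Continuous fun t : ℝ => ‖p + h‖ + C * t).tendsto' 0 _ ?_).mono_left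
      nhdsWithin_le_nhds
    simp
  refine ge_of_tendsto hlim ?_
  filter_upwards [hp, Ioc_mem_nhdsGT one_pos] with t ht ⟨ht0, ht1⟩
  have hconv : ‖p + t • h‖ ≤ (1 - t) * ‖p‖ + t * ‖p + h‖ := by
    calc ‖p + t • h‖ = ‖(1 - t) • p + t • (p + h)‖ := by congr 1; module
      _ ≤ ‖(1 - t) • p‖ + ‖t • (p + h)‖ := norm_add_le _ _
      _ = (1 - t) * ‖p‖ + t * ‖p + h‖ := by
        rw [norm_smul, norm_smul, Real.norm_of_nonneg (by linarith), Real.norm_of_nonneg ht0.le]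
  have : t * ‖p‖ ≤ t * (‖p + h‖ + C * t) := by nlinarith
  exact le_of_mul_le_mul_left this ht0

theorem star_add_smul_mul_add_smul {A : Type*} [Ring A] [StarRing A] [Algebra ℂ A]
    [StarModule ℂ A] (a b : A) (t : ℝ) :
    star (a + t • b) * (a + t • b) =
      star a * a + (2 * t) • (ℜ (star a * b) : A) + t ^ 2 • (star b * b) := by
  rw [realPart_apply_coe, star_mul, star_star, smul_smul, show 2 * t * 2⁻¹ = t by ring, star_add,
    star_smul, star_trivial t]
  simp only [add_mul, mul_add, smul_mul_assoc, mul_smul_comm, smul_add, smul_smul]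
  module

theorem CStarRing.norm_star_mul_self_le_of_norm_le {A : Type*} [NonUnitalNormedRing A]
    [StarRing A] [CStarRing A] {a b : A} (h : ‖a‖ ≤ ‖b‖) :
    ‖star a * a‖ ≤ ‖star b * b‖ := by
  rw [CStarRing.norm_star_mul_self, CStarRing.norm_star_mul_self]
  exact mul_self_le_mul_self (norm_nonneg a) h

theorem CStarRing.norm_star_mul_self_le_add_sq {A : Type*} [NormedRing A] [StarRing A]
    [CStarRing A] [NormedAlgebra ℂ A] [StarModule ℂ A] {a b : A} {t : ℝ}
    (h : ‖a‖ ≤ ‖a + t • b‖) :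
    ‖star a * a‖ ≤ ‖star a * a + (2 * t) • (ℜ (star a * b) : A)‖ + t ^ 2 * ‖b‖ ^ 2 := by
  calc ‖star a * a‖ ≤ ‖star (a + t • b) * (a + t • b)‖ := norm_star_mul_self_le_of_norm_le h
    _ = ‖star a * a + (2 * t) • (ℜ (star a * b) : A) + t ^ 2 • (star b * b)‖ := by
      rw [star_add_smul_mul_add_smul]
    _ ≤ ‖star a * a + (2 * t) • (ℜ (star a * b) : A)‖ + ‖t ^ 2 • (star b * b)‖ := norm_add_le _ _
    _ = _ := by
      rw [norm_smul, CStarRing.norm_star_mul_self, Real.norm_of_nonneg (sq_nonneg t), sq ‖b‖]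

theorem birkhoffJames_orthogonal_iff_star_mul_general
    {A : Type*} [NormedRing A] [StarRing A] [CStarRing A]
    [NormedAlgebra ℂ A] [StarModule ℂ A]
    (a : A) (B : Submodule ℂ A) :
    (∀ b ∈ B, ‖a‖ ≤ ‖a + b‖) ↔
      (∀ c ∈ {c : A | ∃ b ∈ B, c = star a * b}, ‖star a * a‖ ≤ ‖star a * a + c‖) := by
  constructor
  · rintro H c ⟨b, hb, rfl⟩
    have hre : ‖star a * a‖ ≤ ‖star a * a + (ℜ (star a * b) : A)‖ := by
      refine norm_le_norm_add_of_eventually_le_add_sq (C := ‖b‖ ^ 2 / 4) (.of_forall fun t => ?_)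
      calc _ ≤ _ := CStarRing.norm_star_mul_self_le_add_sq (H _ (B.smul_of_tower_mem (t / 2) hb))
        _ = _ := by rw [mul_div_cancel₀ t two_ne_zero]; ring
    calc ‖star a * a‖ ≤ ‖star a * a + (ℜ (star a * b) : A)‖ := hre
      _ = ‖(ℜ (star a * a + star a * b) : A)‖ := by
        rw [map_add, AddSubgroup.coe_add, (IsSelfAdjoint.star_mul_self a).coe_realPart]
      _ ≤ ‖star a * a + star a * b‖ := realPart.norm_le (star a * a + star a * b)
  · intro H b hb
    rcases eq_or_ne a 0 with rfl | ha
    · simp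
    refine le_of_mul_le_mul_left ?_ (norm_pos_iff.2 ha)
    calc ‖a‖ * ‖a‖ = ‖star a * a‖ := CStarRing.norm_star_mul_self.symm
      _ ≤ ‖star a * a + star a * b‖ := H _ ⟨b, hb, rfl⟩
      _ = ‖star a * (a + b)‖ := by rw [mul_add]
      _ ≤ ‖a‖ * ‖a + b‖ := (norm_mul_le _ _).trans_eq (by rw [norm_star])

/-- In a complex C*-algebra, `a` is Birkhoff–James orthogonal to a subspace `B`
if and only if `a* a` is Birkhoff–James orthogonal to the subspace `a* B`. -/
theorem birkhoffJames_orthogonal_iff_star_mul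
    {A : Type*} [NormedRing A] [StarRing A] [CStarRing A]
    [NormedAlgebra ℂ A] [StarModule ℂ A] [CompleteSpace A]
    (a : A) (B : Submodule ℂ A) :
    (∀ b ∈ B, ‖a‖ ≤ ‖a + b‖) ↔
      (∀ c ∈ {c : A | ∃ b ∈ B, c = star a * b}, ‖star a * a‖ ≤ ‖star a * a + c‖) :=
  birkhoffJames_orthogonal_iff_star_mul_general a B
end

section
/- Let Ω be a locally compact Hausdorff space, let C_b(Ω) be the C*-algebra of bounded continuous complex-valued functions on Ω with the supremum norm, and let C_0(Ω) ⊆ C_b(Ω) be the ideal of functions vanishing at infinity. Let f ∈ C_b(Ω) satisfy dist(f, C_0(Ω)) < ‖f‖_∞, and suppose |f| attains the value ‖f‖_∞ at exactly one point x₀ ∈ Ω. Let B be a linear subspace of C_b(Ω). Then f is Birkhoff–James orthogonal to B if and only if h(x₀) = 0 for all h ∈ B. -/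
/-!
If some `h ∈ B` has `h x₀ ≠ 0`, rescale it to `k ∈ B` with `k x₀ = f x₀`. As `f` lies at distance
less than `‖f‖` from `C₀(Ω)`, `|f|` stays uniformly below `‖f‖` off a compact set; with the
uniqueness of the peak this forces `|f|` to be close to `‖f‖` only near `x₀`, where `f - k` is
small. Hence `‖f - t • k‖ < ‖f‖` for small `t > 0`. Conversely, if `h x₀ = 0` then
`‖f + h‖ ≥ ‖f x₀ + h x₀‖ = ‖f‖`.
-/

open BoundedContinuousFunction ZeroAtInfty Filter Topology

theorem BoundedContinuousFunction.exists_eventually_cocompact_norm_lt_of_infDist_lt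
    {Ω E : Type*} [TopologicalSpace Ω] [NormedAddCommGroup E] (f : Ω →ᵇ E)
    (hdist : Metric.infDist f
      (Set.range (ZeroAtInftyContinuousMap.toBCF : C₀(Ω, E) → Ω →ᵇ E)) < ‖f‖) :
    ∃ r < ‖f‖, ∀ᶠ x in cocompact Ω, ‖f x‖ < r := by
  obtain ⟨_, ⟨g, rfl⟩, hfg⟩ := (Metric.infDist_lt_iff (Set.range_nonempty _)).mp hdist
  refine ⟨(dist f g.toBCF + ‖f‖) / 2, by linarith, ?_⟩
  filter_upwards [NormedAddGroup.tendsto_nhds_zero.mp g.zero_at_infty'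
    ((‖f‖ - dist f g.toBCF) / 2) (by linarith)] with x (hgx : ‖g x‖ < _)
  calc ‖f x‖ ≤ dist (f x) (g x) + ‖g x‖ := by
        simpa only [dist_zero_right] using dist_triangle (f x) (g x) 0
    _ ≤ dist f g.toBCF + ‖g x‖ := by gcongr; exact f.dist_coe_le_dist (g := g.toBCF) x
    _ < (dist f g.toBCF + ‖f‖) / 2 := by linarith

theorem Continuous.exists_pos_forall_mem_of_sub_lt_of_unique_max
    {Ω : Type*} [TopologicalSpace Ω] {φ : Ω → ℝ} (hφ : Continuous φ) {x₀ : Ω}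
    (hmax : ∀ x ≠ x₀, φ x < φ x₀) {r : ℝ} (hr₀ : r < φ x₀)
    (hr : ∀ᶠ x in cocompact Ω, φ x < r) {U : Set Ω} (hU : U ∈ 𝓝 x₀) :
    ∃ δ > 0, ∀ x, φ x₀ - δ < φ x → x ∈ U := by
  obtain ⟨K, hK, hKr⟩ := mem_cocompact.mp hr
  obtain ⟨b, hb, hbS⟩ := (hK.diff isOpen_interior).exists_forall_le' hφ.neg.continuousOn
    (a := -φ x₀) fun x hx ↦
      neg_lt_neg (hmax x fun h ↦ hx.2 (h ▸ mem_interior_iff_mem_nhds.mpr hU))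
  refine ⟨φ x₀ - max r (-b), sub_pos.mpr (max_lt hr₀ (by linarith)), fun x hx ↦ ?_⟩
  obtain ⟨hrx, hbx⟩ : r < φ x ∧ -b < φ x := by simpa using hx
  have hxK : x ∈ K := by_contra fun hxK ↦ (hKr hxK).not_gt hrx
  by_contra hxU
  have : b ≤ -φ x := hbS x ⟨hxK, fun hx ↦ hxU (interior_subset hx)⟩
  linarith

theorem BoundedContinuousFunction.exists_norm_sub_smul_lt
    {Ω E : Type*} [TopologicalSpace Ω] [NormedAddCommGroup E] [NormedSpace ℝ E]
    (f k : Ω →ᵇ E) {δ c : ℝ} (hδ : 0 < δ) (hc₀ : 0 ≤ c) (hc : c < ‖f‖)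
    (hk : ∀ x, ‖f‖ - δ < ‖f x‖ → ‖f x - k x‖ ≤ c) :
    ∃ t : ℝ, ‖f - t • k‖ < ‖f‖ := by
  obtain ⟨s, hs, hks⟩ := exists_pos_mul_lt hδ ‖k‖
  set t := min 1 s
  have ht₀ : 0 < t := lt_min one_pos hs
  have ht₁ : t ≤ 1 := min_le_left 1 s
  have hkt : ‖k‖ * t < δ :=
    (mul_le_mul_of_nonneg_left (min_le_right 1 s) (norm_nonneg k)).trans_lt hks
  have hC₀ : 0 ≤ (1 - t) * ‖f‖ + t * c := by have := norm_nonneg f; positivity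
  refine ⟨t, ((norm_le (C := max (‖f‖ - δ + ‖k‖ * t) ((1 - t) * ‖f‖ + t * c))
    (le_max_of_le_right hC₀)).2 fun x ↦ ?_).trans_lt (max_lt (by linarith) (by nlinarith))⟩
  simp only [coe_sub, coe_smul, Pi.sub_apply]
  rcases le_or_gt ‖f x‖ (‖f‖ - δ) with hfar | hnear
  · refine le_max_of_le_left ?_
    calc ‖f x - t • k x‖ ≤ ‖f x‖ + t * ‖k x‖ := by
          simpa [norm_smul, abs_of_pos ht₀] using norm_sub_le (f x) (t • k x)
      _ ≤ ‖f‖ - δ + ‖k‖ * t := by nlinarith [k.norm_coe_le_norm x]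
  · refine le_max_of_le_right ?_
    calc ‖f x - t • k x‖ = ‖(1 - t) • f x + t • (f x - k x)‖ := by congr 1; module
      _ ≤ (1 - t) * ‖f x‖ + t * ‖f x - k x‖ := by
          simpa [norm_smul, abs_of_pos ht₀, abs_of_nonneg (sub_nonneg.2 ht₁)]
            using norm_add_le ((1 - t) • f x) (t • (f x - k x))
      _ ≤ (1 - t) * ‖f‖ + t * c := by
          gcongr
          exacts [f.norm_coe_le_norm x, hk x hnear]

theorem birkhoffJames_orthogonal_iff_vanishes_at_peak_point_general
    {Ω : Type*} [TopologicalSpace Ω]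
    (f : Ω →ᵇ ℂ)
    (hdist : Metric.infDist f
      (Set.range (ZeroAtInftyContinuousMap.toBCF : C₀(Ω, ℂ) → Ω →ᵇ ℂ)) < ‖f‖)
    (x₀ : Ω) (hx₀ : ‖f x₀‖ = ‖f‖)
    (huniq : ∀ x : Ω, ‖f x‖ = ‖f‖ → x = x₀)
    (B : Submodule ℂ (Ω →ᵇ ℂ)) :
    (∀ h ∈ B, ‖f‖ ≤ ‖f + h‖) ↔ ∀ h ∈ B, h x₀ = 0 := by
  refine ⟨fun horth h hh ↦ ?_, fun hB h hh ↦ ?_⟩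
  · by_contra hh₀
    have hf₀ : 0 < ‖f‖ := Metric.infDist_nonneg.trans_lt hdist
    set k := (f x₀ / h x₀) • h
    have hk₀ : k x₀ = f x₀ := by simp [k, div_mul_cancel₀ _ hh₀]
    have hU : ∀ᶠ x in 𝓝 x₀, ‖f x - k x‖ < ‖f‖ / 2 :=
      (f - k).continuous.norm.continuousAt.eventually_lt continuousAt_const
        (by simpa [hk₀] using half_pos hf₀)
    have hmax : ∀ x ≠ x₀, ‖f x‖ < ‖f x₀‖ := fun x hx ↦
      hx₀ ▸ (f.norm_coe_le_norm x).lt_of_ne (mt (huniq x) hx)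
    obtain ⟨r, hr, hrK⟩ := f.exists_eventually_cocompact_norm_lt_of_infDist_lt hdist
    obtain ⟨δ, hδ, hδU⟩ := f.continuous.norm.exists_pos_forall_mem_of_sub_lt_of_unique_max hmax
      (hx₀ ▸ hr) hrK hU
    obtain ⟨t, ht⟩ := f.exists_norm_sub_smul_lt k hδ (half_pos hf₀).le (half_lt_self hf₀)
      fun x hx ↦ (hδU x (by rwa [hx₀])).le
    have hk : k ∈ B := B.smul_mem _ hh
    exact (horth _ (B.neg_mem (B.smul_of_tower_mem t hk))).not_gt (by rwa [← sub_eq_add_neg])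
  · calc ‖f‖ = ‖(f + h) x₀‖ := by simp [hB h hh, hx₀]
      _ ≤ ‖f + h‖ := (f + h).norm_coe_le_norm x₀

/-- Let `Ω` be a locally compact Hausdorff space and `f ∈ C_b(Ω)` with
`dist(f, C₀(Ω)) < ‖f‖_∞`, and suppose `|f|` attains the value `‖f‖_∞` at exactly
one point `x₀`.  Then `f` is Birkhoff–James orthogonal to a subspace `B` of `C_b(Ω)`
iff `h x₀ = 0` for all `h ∈ B`. -/
theorem birkhoffJames_orthogonal_iff_vanishes_at_peak_point
    {Ω : Type*} [TopologicalSpace Ω] [LocallyCompactSpace Ω] [T2Space Ω]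
    (f : Ω →ᵇ ℂ)
    (hdist : Metric.infDist f
      (Set.range (ZeroAtInftyContinuousMap.toBCF : C₀(Ω, ℂ) → Ω →ᵇ ℂ)) < ‖f‖)
    (x₀ : Ω) (hx₀ : ‖f x₀‖ = ‖f‖)
    (huniq : ∀ x : Ω, ‖f x‖ = ‖f‖ → x = x₀)
    (B : Submodule ℂ (Ω →ᵇ ℂ)) :
    (∀ h ∈ B, ‖f‖ ≤ ‖f + h‖) ↔ ∀ h ∈ B, h x₀ = 0 :=
  birkhoffJames_orthogonal_iff_vanishes_at_peak_point_general f hdist x₀ hx₀ huniq B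
end

section
/- Let Ω be a locally compact Hausdorff space and let C_0(Ω) be the C*-algebra of continuous complex-valued functions on Ω vanishing at infinity, with the supremum norm. A function f ∈ C_0(Ω) with ‖f‖_∞ = 1 is a smooth point of the unit ball of C_0(Ω) if and only if |f(x)| = 1 for exactly one point x ∈ Ω. -/
open ZeroAtInfty Filter Set

/-!
If `‖f‖ = 1` and `|f|` peaks at two points `x ≠ y`, the functionals `g ↦ conj (f x) g x` and
`g ↦ conj (f y) g y` both norm `f`, and an Urysohn function separates them.

Conversely, let `|f|` peak only at `x₀` and let `G` norm `f`. For `g` with `g x₀ = 0` and `ε > 0`,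
`|f|` is bounded by some `m < 1` off the neighbourhood `{|g| < ε}` of `x₀` (as `f` vanishes at
infinity), so `‖f + t g‖ ≤ 1 + |t| ε` for small `|t|`. Rotating `t` so that `t G g = |t| |G g|`
gives `1 + |t| |G g| = |G (f + t g)| ≤ 1 + |t| ε`, hence `G g = 0`. Since every `g` is a multiple
of `f` plus such a function, `G` is the evaluation functional at `x₀` twisted by `conj (f x₀)`.
-/

section Perturbation

variable {𝕜 E : Type*} [RCLike 𝕜] [NormedAddCommGroup E] [NormedSpace 𝕜 E]

theorem norm_apply_le_of_norm_add_smul_le {G : E →L[𝕜] 𝕜} {f g : E} (hG : ‖G‖ ≤ 1)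
    (hGf : G f = 1) {s ε : ℝ} (hs : 0 < s)
    (h : ∀ t : 𝕜, ‖t‖ = s → ‖f + t • g‖ ≤ 1 + s * ε) : ‖G g‖ ≤ ε := by
  obtain ⟨c, hc, hcG⟩ := RCLike.exists_norm_eq_mul_self (G g)
  have hts : ‖(s : 𝕜) * c‖ = s := by simp [hc, hs.le]
  have hGt : G (f + ((s : 𝕜) * c) • g) = ((1 + s * ‖G g‖ : ℝ) : 𝕜) := by
    rw [map_add, map_smul, hGf, smul_eq_mul, mul_assoc, ← hcG]
    push_cast
    ring
  have : 1 + s * ‖G g‖ ≤ 1 + s * ε :=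
    calc 1 + s * ‖G g‖ = ‖G (f + ((s : 𝕜) * c) • g)‖ := by
          rw [hGt, RCLike.norm_ofReal, abs_of_nonneg (by positivity)]
      _ ≤ ‖G‖ * ‖f + ((s : 𝕜) * c) • g‖ := G.le_opNorm _
      _ ≤ 1 * (1 + s * ε) := by
          gcongr
          exact h _ hts
      _ = 1 + s * ε := one_mul _
  exact le_of_mul_le_mul_left (by linarith) hs

end Perturbation

namespace ZeroAtInftyContinuousMap

variable {Ω : Type*} [TopologicalSpace Ω]

section Normed

variable {E : Type*} [NormedAddCommGroup E]

theorem norm_coe_le_norm (f : C₀(Ω, E)) (x : Ω) : ‖f x‖ ≤ ‖f‖ :=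
  f.toBCF.norm_coe_le_norm x

theorem norm_le {f : C₀(Ω, E)} {C : ℝ} (hC : 0 ≤ C) : ‖f‖ ≤ C ↔ ∀ x, ‖f x‖ ≤ C :=
  BoundedContinuousFunction.norm_le (f := f.toBCF) hC

/-- A strict bound on a closed set improves to a uniform strict bound, because `‖f‖ ≥ r / 2`
only on a compact set. -/
theorem exists_lt_forall_norm_le_of_isClosed (f : C₀(Ω, E)) {C : Set Ω} (hC : IsClosed C)
    {r : ℝ} (hr : 0 < r) (hlt : ∀ x ∈ C, ‖f x‖ < r) : ∃ m ∈ Ico 0 r, ∀ x ∈ C, ‖f x‖ ≤ m := by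
  have hsmall : ∀ᶠ x in cocompact Ω, ‖f x‖ < r / 2 := by
    simpa [dist_eq_norm] using Metric.tendsto_nhds.1 (zero_at_infty f) (r / 2) (half_pos hr)
  obtain ⟨K, hK, hKc⟩ := mem_cocompact.1 hsmall
  have hout : ∀ x ∈ C, x ∉ K → ‖f x‖ ≤ r / 2 := fun x _ hxK => (hKc hxK).le
  rcases (K ∩ C).eq_empty_or_nonempty with hempty | hne
  · refine ⟨r / 2, ⟨by positivity, half_lt_self hr⟩, fun x hx => hout x hx fun hxK => ?_⟩
    exact hempty.subset ⟨hxK, hx⟩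
  obtain ⟨y, hy, hymax⟩ := (hK.inter_right hC).exists_isMaxOn hne
    (map_continuous f).norm.continuousOn
  refine ⟨max ‖f y‖ (r / 2), ⟨le_max_of_le_right (by positivity),
    max_lt (hlt y hy.2) (half_lt_self hr)⟩, fun x hx => ?_⟩
  by_cases hxK : x ∈ K
  · exact le_max_of_le_left (hymax ⟨hxK, hx⟩)
  · exact le_max_of_le_right (hout x hx hxK)

theorem exists_norm_apply_eq_norm (f : C₀(Ω, E)) (hf : 0 < ‖f‖) : ∃ x, ‖f x‖ = ‖f‖ := by
  by_contra! hne
  obtain ⟨m, ⟨hm0, hm⟩, hbound⟩ := f.exists_lt_forall_norm_le_of_isClosed isClosed_univ hf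
    fun x _ => (f.norm_coe_le_norm x).lt_of_ne (hne x)
  exact hm.not_ge ((norm_le hm0).2 fun x => hbound x (mem_univ x))

end Normed

section RCLike

variable {𝕜 : Type*} [RCLike 𝕜]

variable (𝕜) in
noncomputable def evalCLM (x : Ω) : C₀(Ω, 𝕜) →L[𝕜] 𝕜 :=
  LinearMap.mkContinuous
    { toFun := fun g => g x
      map_add' := fun _ _ => rfl
      map_smul' := fun _ _ => rfl }
    1 fun g => by simpa using g.norm_coe_le_norm x

@[simp]
theorem evalCLM_apply (x : Ω) (g : C₀(Ω, 𝕜)) : evalCLM 𝕜 x g = g x := rfl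

theorem norm_evalCLM_le (x : Ω) : ‖evalCLM 𝕜 x‖ ≤ 1 :=
  LinearMap.mkContinuous_norm_le _ zero_le_one _

theorem norming_conj_smul_evalCLM {f : C₀(Ω, 𝕜)} (hf : ‖f‖ = 1) {x : Ω} (hx : ‖f x‖ = 1) :
    ‖starRingEnd 𝕜 (f x) • evalCLM 𝕜 x‖ = 1 ∧ (starRingEnd 𝕜 (f x) • evalCLM 𝕜 x) f = 1 := by
  have happly : (starRingEnd 𝕜 (f x) • evalCLM 𝕜 x) f = 1 := by
    simp [RCLike.conj_mul, hx]
  refine ⟨le_antisymm ?_ ?_, happly⟩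
  · calc ‖starRingEnd 𝕜 (f x) • evalCLM 𝕜 x‖ ≤ ‖starRingEnd 𝕜 (f x)‖ * ‖evalCLM 𝕜 x‖ :=
          ContinuousLinearMap.opNorm_smul_le _ _
      _ ≤ 1 * 1 := by
          rw [RCLike.norm_conj, hx]
          gcongr
          exact norm_evalCLM_le x
      _ = 1 := one_mul 1
  · simpa [happly, hf] using (starRingEnd 𝕜 (f x) • evalCLM 𝕜 x).le_opNorm f

theorem exists_eq_one_eq_zero [LocallyCompactSpace Ω] [T2Space Ω] {x y : Ω} (hxy : x ≠ y) :
    ∃ g : C₀(Ω, 𝕜), g y = 1 ∧ g x = 0 := by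
  obtain ⟨b, hby, hbx, hbsupp, -⟩ := exists_continuous_one_zero_of_isCompact
    isCompact_singleton isClosed_singleton (disjoint_singleton.2 hxy.symm)
  let g : C(Ω, 𝕜) := (⟨((↑) : ℝ → 𝕜), RCLike.continuous_ofReal⟩ : C(ℝ, 𝕜)).comp b
  have hg : HasCompactSupport g := hbsupp.comp_left (g := ((↑) : ℝ → 𝕜)) RCLike.ofReal_zero
  refine ⟨⟨g, hg.is_zero_at_infty⟩, ?_, ?_⟩
  · exact (congrArg ((↑) : ℝ → 𝕜) (hby (mem_singleton y))).trans RCLike.ofReal_one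
  · exact (congrArg ((↑) : ℝ → 𝕜) (hbx (mem_singleton x))).trans RCLike.ofReal_zero

theorem conj_smul_evalCLM_ne [LocallyCompactSpace Ω] [T2Space Ω] {f : C₀(Ω, 𝕜)} {x y : Ω}
    (hxy : x ≠ y) (hy : f y ≠ 0) :
    starRingEnd 𝕜 (f x) • evalCLM 𝕜 x ≠ starRingEnd 𝕜 (f y) • evalCLM 𝕜 y := by
  obtain ⟨g, hgy, hgx⟩ := exists_eq_one_eq_zero (𝕜 := 𝕜) hxy
  intro heq
  have := congrArg (fun F : C₀(Ω, 𝕜) →L[𝕜] 𝕜 => F g) heq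
  simp only [FunLike.coe_smul, Pi.smul_apply, evalCLM_apply, hgx, hgy, smul_eq_mul,
    mul_zero, mul_one] at this
  exact hy (by simpa using this.symm)

theorem apply_eq_zero_of_apply_peak_eq_zero {f : C₀(Ω, 𝕜)} (hf : ‖f‖ = 1) {x₀ : Ω}
    (hpeak : ∀ x, ‖f x‖ = 1 → x = x₀) {G : C₀(Ω, 𝕜) →L[𝕜] 𝕜} (hG : ‖G‖ ≤ 1) (hGf : G f = 1)
    {g : C₀(Ω, 𝕜)} (hg : g x₀ = 0) : G g = 0 := by
  suffices ∀ ε > 0, ‖G g‖ ≤ ε from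
    norm_le_zero_iff.1 (le_of_forall_pos_le_add fun ε hε => by simpa using this ε hε)
  intro ε hε
  set U : Set Ω := {x | ‖g x‖ < ε}
  have hU : IsOpen U := isOpen_lt (map_continuous g).norm continuous_const
  have hfU : ∀ x ∈ Uᶜ, ‖f x‖ < 1 := fun x hx =>
    (hf ▸ f.norm_coe_le_norm x).lt_of_ne fun h1 => hx (by simpa [U, hpeak x h1, hg] using hε)
  obtain ⟨m, ⟨hm0, hm1⟩, hm⟩ := f.exists_lt_forall_norm_le_of_isClosed hU.isClosed_compl
    one_pos hfU
  have hgpos : 0 < ‖g‖ + 1 := by positivity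
  refine norm_apply_le_of_norm_add_smul_le hG hGf (s := (1 - m) / (‖g‖ + 1))
    (div_pos (by linarith) hgpos) fun t ht => (norm_le (by positivity)).2 fun x => ?_
  have hsg : ‖t‖ * ‖g‖ ≤ 1 - m := by
    rw [ht, div_mul_eq_mul_div, div_le_iff₀ hgpos]
    nlinarith [norm_nonneg g]
  calc ‖(f + t • g) x‖ ≤ ‖f x‖ + ‖t‖ * ‖g x‖ := by
        simpa [norm_smul] using norm_add_le (f x) (t • g x)
    _ ≤ 1 + ‖t‖ * ε := by
        by_cases hxU : x ∈ U
        · have := hf ▸ f.norm_coe_le_norm x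
          have := mul_le_mul_of_nonneg_left (le_of_lt hxU) (norm_nonneg t)
          linarith
        · have := mul_le_mul_of_nonneg_left (g.norm_coe_le_norm x) (norm_nonneg t)
          linarith [hm x hxU, mul_nonneg (norm_nonneg t) hε.le]
    _ = 1 + (1 - m) / (‖g‖ + 1) * ε := by rw [ht]

theorem eq_conj_smul_evalCLM_of_peak {f : C₀(Ω, 𝕜)} (hf : ‖f‖ = 1) {x₀ : Ω} (hx₀ : ‖f x₀‖ = 1)
    (hpeak : ∀ x, ‖f x‖ = 1 → x = x₀) {G : C₀(Ω, 𝕜) →L[𝕜] 𝕜} (hG : ‖G‖ ≤ 1) (hGf : G f = 1) :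
    G = starRingEnd 𝕜 (f x₀) • evalCLM 𝕜 x₀ := by
  have hfx₀ : f x₀ ≠ 0 := norm_ne_zero_iff.1 (hx₀ ▸ one_ne_zero)
  ext g
  have hvanish : (g - (g x₀ / f x₀) • f) x₀ = 0 := by simp [hfx₀]
  have hGg := apply_eq_zero_of_apply_peak_eq_zero hf hpeak hG hGf hvanish
  rw [map_sub, map_smul, hGf, smul_eq_mul, mul_one, sub_eq_zero] at hGg
  have hconj : starRingEnd 𝕜 (f x₀) = (f x₀)⁻¹ := by
    rw [RCLike.inv_def, hx₀]
    simp
  rw [hGg, FunLike.coe_smul, Pi.smul_apply, evalCLM_apply, smul_eq_mul, hconj, div_eq_mul_inv,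
    mul_comm]

end RCLike

end ZeroAtInftyContinuousMap

open ZeroAtInftyContinuousMap in
/-- A norm-one function `f ∈ C₀(Ω)`, for `Ω` a locally compact Hausdorff space, is a
smooth point of the unit ball of `C₀(Ω)` iff `|f|` attains the value `1` at exactly
one point. -/
theorem smooth_point_c0
    {Ω : Type*} [TopologicalSpace Ω] [LocallyCompactSpace Ω] [T2Space Ω]
    (f : C₀(Ω, ℂ)) (hf : ‖f‖ = 1) :
    (∃! F : C₀(Ω, ℂ) →L[ℂ] ℂ, ‖F‖ = 1 ∧ F f = 1) ↔
      ∃! x : Ω, ‖f x‖ = 1 := by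
  constructor
  · rintro ⟨F, -, hF⟩
    obtain ⟨x, hx⟩ := f.exists_norm_apply_eq_norm (hf ▸ one_pos)
    rw [hf] at hx
    refine ⟨x, hx, fun y hy => by_contra fun hyx => ?_⟩
    refine conj_smul_evalCLM_ne hyx (norm_ne_zero_iff.1 (hx ▸ one_ne_zero)) ?_
    exact (hF _ (norming_conj_smul_evalCLM hf hy)).trans
      (hF _ (norming_conj_smul_evalCLM hf hx)).symm
  · rintro ⟨x₀, hx₀, hpeak⟩
    exact ⟨_, norming_conj_smul_evalCLM hf hx₀,
      fun G hG => eq_conj_smul_evalCLM_of_peak hf hx₀ hpeak hG.1.le hG.2⟩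
end

section
/- Let Ω be a locally compact Hausdorff space, let C_b(Ω) be the C*-algebra of bounded continuous complex-valued functions on Ω with the supremum norm, and let C_0(Ω) ⊆ C_b(Ω) be the ideal of functions vanishing at infinity. Let f ∈ C_b(Ω) satisfy dist(f, C_0(Ω)) < ‖f‖_∞. Then for any g ∈ C_b(Ω), lim_{t→0⁺} (‖f + t·g‖_∞ − ‖f‖_∞)/t = sup{ Re( conj(f(x)) · g(x) ) / ‖f‖_∞ : x ∈ Ω, |f(x)| = ‖f‖_∞ }. -/
open Filter BoundedContinuousFunction ZeroAtInfty

/-! Since `Re (conj a * b) = ⟪a, b⟫_ℝ` on `ℂ`, the argument runs in any real inner product space.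
Approximating `f` by a function vanishing at infinity shows that `‖f x‖ ≤ c < ‖f‖` off a compact
set; hence `‖f‖` is attained, and on every closed set avoiding the peak set
`{x | ‖f x‖ = ‖f‖}` the modulus `‖f x‖` is bounded by some `c' < ‖f‖`. Let `R` be the supremum.
Testing `f + t • g` at peak points (`⟪a, a + t • b⟫ ≤ ‖a‖ * ‖a + t • b‖`) gives
`‖f‖ + t * R ≤ ‖f + t • g‖`. Conversely, for `ε > 0`, where `⟪f x, g x⟫ ≥ ‖f‖ * (R + ε / 2)` we are
away from the peak set and `‖f x + t • g x‖ ≤ c' + t * ‖g‖`, while elsewhere expanding the square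
gives `‖f x + t • g x‖ ≤ ‖f‖ + t * (R + ε)`; both are `≤ ‖f‖ + t * (R + ε)` for small `t > 0`. -/

open Topology Set Metric

open scoped RealInnerProductSpace

section Pointwise

variable {E : Type*} [SeminormedAddCommGroup E] [InnerProductSpace ℝ E]

theorem norm_add_mul_inner_div_norm_le (a b : E) (t : ℝ) :
    ‖a‖ + t * (⟪a, b⟫ / ‖a‖) ≤ ‖a + t • b‖ := by
  rcases (norm_nonneg a).eq_or_lt with ha | ha
  · simp [← ha]
  · rw [← mul_le_mul_iff_of_pos_left ha]
    calc ‖a‖ * (‖a‖ + t * (⟪a, b⟫ / ‖a‖)) = ⟪a, a + t • b⟫ := by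
          rw [inner_add_right, real_inner_self_eq_norm_sq, real_inner_smul_right]
          field_simp
      _ ≤ ‖a‖ * ‖a + t • b‖ := real_inner_le_norm _ _

theorem norm_add_smul_le_of_inner_le {a b : E} {t M B r s : ℝ} (ht : 0 ≤ t) (ha : ‖a‖ ≤ M)
    (hb : ‖b‖ ≤ B) (hab : ⟪a, b⟫ ≤ M * s) (htB : t * (B ^ 2 - r ^ 2) ≤ 2 * M * (r - s))
    (hMtr : 0 ≤ M + t * r) : ‖a + t • b‖ ≤ M + t * r := by
  refine (pow_le_pow_iff_left₀ (norm_nonneg _) hMtr two_ne_zero).1 ?_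
  have ha2 : ‖a‖ ^ 2 ≤ M ^ 2 := pow_le_pow_left₀ (norm_nonneg a) ha 2
  have hb2 : ‖b‖ ^ 2 ≤ B ^ 2 := pow_le_pow_left₀ (norm_nonneg b) hb 2
  rw [norm_add_sq_real, real_inner_smul_right, norm_smul, Real.norm_of_nonneg ht]
  nlinarith [mul_le_mul_of_nonneg_left hab ht, mul_le_mul_of_nonneg_left hb2 (sq_nonneg t)]

end Pointwise

theorem eventually_mul_lt (c : ℝ) {d : ℝ} (hd : 0 < d) : ∀ᶠ t in 𝓝 (0 : ℝ), t * c < d :=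
  (continuous_id.mul continuous_const).tendsto' 0 0 (zero_mul c) |>.eventually (gt_mem_nhds hd)

theorem exists_lt_forall_le_of_eventually_cocompact_le {Ω : Type*} [TopologicalSpace Ω]
    {u : Ω → ℝ} (hu : Continuous u) {c M : ℝ} (hc : c < M)
    (hcpt : ∀ᶠ x in cocompact Ω, u x ≤ c) {C : Set Ω} (hC : IsClosed C)
    (hlt : ∀ x ∈ C, u x < M) : ∃ c' < M, ∀ x ∈ C, u x ≤ c' := by
  obtain ⟨K, hK, hKc⟩ := mem_cocompact.1 hcpt
  obtain ⟨η, hη, hKC⟩ := (hK.inter_right hC).exists_forall_le'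
    (continuous_const.sub hu).continuousOn (a := 0) fun x hx => sub_pos.2 (hlt x hx.2)
  refine ⟨max c (M - η), max_lt hc (by linarith), fun x hx => ?_⟩
  by_cases hxK : x ∈ K
  · exact le_max_of_le_right (by linarith [show η ≤ M - u x from hKC x ⟨hxK, hx⟩])
  · exact le_max_of_le_left (hKc hxK)

namespace BoundedContinuousFunction

variable {Ω : Type*} [TopologicalSpace Ω]

theorem exists_lt_eventually_cocompact_norm_le_of_infDist_lt {E : Type*}
    [SeminormedAddCommGroup E] (f : Ω →ᵇ E) {M : ℝ}
    (h : infDist f (range (ZeroAtInftyContinuousMap.toBCF : C₀(Ω, E) → Ω →ᵇ E)) < M) :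
    ∃ c < M, ∀ᶠ x in cocompact Ω, ‖f x‖ ≤ c := by
  obtain ⟨_, ⟨h₀, rfl⟩, hdist⟩ := (infDist_lt_iff ⟨_, mem_range_self 0⟩).1 h
  refine ⟨(M + dist f h₀.toBCF) / 2, by linarith, ?_⟩
  filter_upwards [(zero_at_infty h₀).eventually
    (ball_mem_nhds (0 : E) (half_pos (sub_pos.2 hdist)))] with x hx
  calc ‖f x‖ ≤ dist (f x) (h₀ x) + dist (h₀ x) 0 := by
        simpa only [dist_zero_right] using dist_triangle (f x) (h₀ x) 0
    _ ≤ dist f h₀.toBCF + dist (h₀ x) 0 := by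
        gcongr
        exact dist_coe_le_dist (f := f) (g := h₀.toBCF) x
    _ ≤ (M + dist f h₀.toBCF) / 2 := by linarith

theorem exists_norm_apply_eq_norm {E : Type*} [SeminormedAddCommGroup E] (f : Ω →ᵇ E)
    (hf : 0 < ‖f‖) {c : ℝ} (hc : c < ‖f‖) (hcpt : ∀ᶠ x in cocompact Ω, ‖f x‖ ≤ c) :
    ∃ x, ‖f x‖ = ‖f‖ := by
  by_contra! hne
  obtain ⟨c', hc', hle⟩ := exists_lt_forall_le_of_eventually_cocompact_le
    (continuous_norm.comp f.continuous) hc hcpt isClosed_univ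
    fun x _ => (f.norm_coe_le_norm x).lt_of_ne (hne x)
  have hnorm : ‖f‖ ≤ max c' 0 :=
    (norm_le (le_max_right _ _)).2 fun x => le_max_of_le_left (hle x trivial)
  exact hnorm.not_gt (max_lt hc' hf)

variable {E : Type*} [SeminormedAddCommGroup E] [InnerProductSpace ℝ E]

theorem eventually_norm_add_smul_le (f g : Ω →ᵇ E) (hf : 0 < ‖f‖) {c : ℝ} (hc : c < ‖f‖)
    (hcpt : ∀ᶠ x in cocompact Ω, ‖f x‖ ≤ c) {r : ℝ}
    (hr : ∀ x, ‖f x‖ = ‖f‖ → ⟪f x, g x⟫ ≤ ‖f‖ * r) {ε : ℝ} (hε : 0 < ε) :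
    ∀ᶠ t in 𝓝[>] 0, ‖f + t • g‖ ≤ ‖f‖ + t * (r + ε) := by
  set M := ‖f‖
  obtain ⟨c', hc', hle⟩ := exists_lt_forall_le_of_eventually_cocompact_le
    (continuous_norm.comp f.continuous) hc hcpt (C := {x | M * (r + ε / 2) ≤ ⟪f x, g x⟫})
    (isClosed_le continuous_const (f.continuous.inner g.continuous)) fun x hx => by
      refine (f.norm_coe_le_norm x).lt_of_ne fun hx' => ?_
      nlinarith [hr x hx', show M * (r + ε / 2) ≤ ⟪f x, g x⟫ from hx]
  have hsmall : ∀ᶠ t in 𝓝 (0 : ℝ), t * (‖g‖ - (r + ε)) < M - c' ∧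
      t * (‖g‖ ^ 2 - (r + ε) ^ 2) < M * ε ∧ t * -(r + ε) < M :=
    (eventually_mul_lt _ (sub_pos.2 hc')).and
      ((eventually_mul_lt _ (mul_pos hf hε)).and (eventually_mul_lt _ hf))
  filter_upwards [self_mem_nhdsWithin, nhdsWithin_le_nhds hsmall] with t ht ⟨h₁, h₂, h₃⟩
  have ht : 0 ≤ t := le_of_lt ht
  refine (norm_le (by linarith)).2 fun x => ?_
  rw [coe_add, coe_smul, Pi.add_apply]
  by_cases hx : M * (r + ε / 2) ≤ ⟪f x, g x⟫
  · calc ‖f x + t • g x‖ ≤ ‖f x‖ + t * ‖g x‖ := by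
          simpa [norm_smul, abs_of_nonneg ht] using norm_add_le (f x) (t • g x)
      _ ≤ c' + t * ‖g‖ := by gcongr; exacts [hle x hx, g.norm_coe_le_norm x]
      _ ≤ M + t * (r + ε) := by linarith
  · exact norm_add_smul_le_of_inner_le ht (f.norm_coe_le_norm x) (g.norm_coe_le_norm x)
      (le_of_lt (not_le.1 hx)) (by linarith) (by linarith)

theorem tendsto_norm_add_smul_sub_div (f g : Ω →ᵇ E) (hf : 0 < ‖f‖) {c : ℝ} (hc : c < ‖f‖)
    (hcpt : ∀ᶠ x in cocompact Ω, ‖f x‖ ≤ c) :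
    Tendsto (fun t : ℝ => (‖f + t • g‖ - ‖f‖) / t) (𝓝[>] 0)
      (𝓝 (sSup {r | ∃ x, ‖f x‖ = ‖f‖ ∧ r = ⟪f x, g x⟫ / ‖f‖})) := by
  set S := {r | ∃ x, ‖f x‖ = ‖f‖ ∧ r = ⟪f x, g x⟫ / ‖f‖}
  have hS : BddAbove S := by
    refine ⟨‖g‖, ?_⟩
    rintro _ ⟨x, hx, rfl⟩
    rw [div_le_iff₀ hf]
    calc ⟪f x, g x⟫ ≤ ‖f x‖ * ‖g x‖ := real_inner_le_norm _ _
      _ ≤ ‖g‖ * ‖f‖ := by rw [hx, mul_comm]; gcongr; exact g.norm_coe_le_norm x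
  have hSne : S.Nonempty :=
    let ⟨x, hx⟩ := f.exists_norm_apply_eq_norm hf hc hcpt
    ⟨_, x, hx, rfl⟩
  have hlow : ∀ t > 0, sSup S ≤ (‖f + t • g‖ - ‖f‖) / t := by
    refine fun t ht => csSup_le hSne ?_
    rintro _ ⟨x, hx, rfl⟩
    rw [le_div_iff₀ ht]
    have hpeak := norm_add_mul_inner_div_norm_le (f x) (g x) t
    have hsup := (f + t • g).norm_coe_le_norm x
    rw [hx] at hpeak
    rw [coe_add, coe_smul, Pi.add_apply] at hsup
    linarith
  have hr : ∀ x, ‖f x‖ = ‖f‖ → ⟪f x, g x⟫ ≤ ‖f‖ * sSup S := fun x hx => by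
    rw [← div_le_iff₀' hf]
    exact le_csSup hS ⟨x, hx, rfl⟩
  refine tendsto_order.2 ⟨fun a ha => ?_, fun b hb => ?_⟩
  · filter_upwards [self_mem_nhdsWithin] with t ht
    exact ha.trans_le (hlow t ht)
  · filter_upwards [eventually_norm_add_smul_le f g hf hc hcpt hr (half_pos (sub_pos.2 hb)),
      self_mem_nhdsWithin] with t hle ht
    rw [div_lt_iff₀ ht]
    nlinarith [mul_pos (mem_Ioi.1 ht) (sub_pos.2 hb)]

end BoundedContinuousFunction

theorem gateaux_derivative_cb_norm_general
    {Ω : Type*} [TopologicalSpace Ω]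
    (f : Ω →ᵇ ℂ)
    (hdist : Metric.infDist f
      (Set.range (ZeroAtInftyContinuousMap.toBCF : C₀(Ω, ℂ) → Ω →ᵇ ℂ)) < ‖f‖)
    (g : Ω →ᵇ ℂ) :
    Tendsto (fun t : ℝ => (‖f + t • g‖ - ‖f‖) / t)
      (nhdsWithin 0 (Set.Ioi 0))
      (nhds (sSup {r : ℝ | ∃ x : Ω, ‖f x‖ = ‖f‖ ∧
        r = ((starRingEnd ℂ) (f x) * g x).re / ‖f‖})) := by
  obtain ⟨c, hc, hcpt⟩ := f.exists_lt_eventually_cocompact_norm_le_of_infDist_lt hdist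
  have hre : ∀ x, ((starRingEnd ℂ) (f x) * g x).re = ⟪f x, g x⟫ := fun x => by
    rw [Complex.inner, mul_comm]
  simp only [hre]
  exact f.tendsto_norm_add_smul_sub_div g (infDist_nonneg.trans_lt hdist) hc hcpt

/-- Let `Ω` be a locally compact Hausdorff space and `f ∈ C_b(Ω)` with
`dist(f, C₀(Ω)) < ‖f‖_∞`.  Then for any `g ∈ C_b(Ω)`,
`lim_{t→0⁺} (‖f + t g‖_∞ - ‖f‖_∞)/t
  = sup { Re(conj(f x) · g x) / ‖f‖_∞ : x ∈ Ω, |f x| = ‖f‖_∞ }`. -/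
theorem gateaux_derivative_cb_norm
    {Ω : Type*} [TopologicalSpace Ω] [LocallyCompactSpace Ω] [T2Space Ω]
    (f : Ω →ᵇ ℂ)
    (hdist : Metric.infDist f
      (Set.range (ZeroAtInftyContinuousMap.toBCF : C₀(Ω, ℂ) → Ω →ᵇ ℂ)) < ‖f‖)
    (g : Ω →ᵇ ℂ) :
    Tendsto (fun t : ℝ => (‖f + t • g‖ - ‖f‖) / t)
      (nhdsWithin 0 (Set.Ioi 0))
      (nhds (sSup {r : ℝ | ∃ x : Ω, ‖f x‖ = ‖f‖ ∧
        r = ((starRingEnd ℂ) (f x) * g x).re / ‖f‖})) :=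
  gateaux_derivative_cb_norm_general f hdist g
end

section
/- Let A be a complex C*-algebra, let I be a closed two-sided ideal of A, and let a ∈ A be nonzero with dist(a, I) < ‖a‖. If ψ is a bounded linear functional on A with ‖ψ‖ = 1 and ψ(a* a) = ‖a‖², then the restriction of ψ to I has norm one, i.e. ‖ψ|_I‖ = ‖ψ‖ = 1. -/
/-!
Write `h = a⋆a`, so `ψ h = ‖h‖ = ‖a‖²`. Since `dist(a, I) < ‖a‖` there is `b ∈ I` with
`‖k‖ < β < ‖h‖`, where `k = (a - b)⋆(a - b)` and `β ≥ ‖h‖ / 2`; moreover `h ≡ k` modulo `I`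
(closed ideals of a C⋆-algebra are self-adjoint, as `x⋆ = lim x⋆ f(x x⋆)` for cutoffs `f`). By
polynomial approximation the continuous functional calculus respects congruence modulo a closed
ideal, so for a cutoff `f` vanishing on `(-∞, ‖k‖]` and equal to `1` on `[β, ∞)` the contraction
`c = f(h)` is congruent to `f(k) = 0`, i.e. lies in `I`. Spectral calculus gives
`‖h - (‖h‖ - β) c‖ ≤ β`, and applying `ψ` forces `Re ψ c ≥ 1`.
-/

open Polynomial Metric

noncomputable def ramp (α β t : ℝ) : ℝ := max 0 (min 1 ((t - α) / (β - α)))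

section Ramp

variable {α β : ℝ}

@[fun_prop]
lemma continuous_ramp (α β : ℝ) : Continuous (ramp α β) := by
  unfold ramp
  fun_prop

lemma ramp_nonneg (α β t : ℝ) : 0 ≤ ramp α β t := le_max_left _ _

lemma ramp_le_one (α β t : ℝ) : ramp α β t ≤ 1 := max_le zero_le_one (min_le_left _ _)

lemma ramp_eq_zero_of_le (hαβ : α < β) {t : ℝ} (ht : t ≤ α) : ramp α β t = 0 :=
  max_eq_left <| (min_le_right _ _).trans <|
    div_nonpos_of_nonpos_of_nonneg (sub_nonpos.mpr ht) (sub_nonneg.mpr hαβ.le)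

lemma ramp_eq_one_of_le (hαβ : α < β) {t : ℝ} (ht : β ≤ t) : ramp α β t = 1 := by
  have : 1 ≤ (t - α) / (β - α) := (one_le_div (sub_pos.mpr hαβ)).mpr (by linarith)
  rw [ramp, min_eq_left this, max_eq_right zero_le_one]

end Ramp

lemma pow_sub_pow_mem_of_sub_mem {R A : Type*} [Semiring R] [Ring A] [Module R A]
    (I : Submodule R A) (hI_left : ∀ x ∈ I, ∀ y : A, y * x ∈ I)
    (hI_right : ∀ x ∈ I, ∀ y : A, x * y ∈ I) {u v : A} (huv : u - v ∈ I) (n : ℕ) :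
    u ^ n - v ^ n ∈ I := by
  induction n with
  | zero => simp
  | succ n ih =>
    have e : u ^ (n + 1) - v ^ (n + 1) = u ^ n * (u - v) + (u ^ n - v ^ n) * v := by noncomm_ring
    rw [e]
    exact I.add_mem (hI_left _ huv _) (hI_right _ ih _)

lemma aeval_sub_aeval_mem_of_sub_mem {R A : Type*} [CommSemiring R] [Ring A] [Algebra R A]
    (I : Submodule R A) (hI_left : ∀ x ∈ I, ∀ y : A, y * x ∈ I)
    (hI_right : ∀ x ∈ I, ∀ y : A, x * y ∈ I) {u v : A} (huv : u - v ∈ I) (p : R[X]) :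
    aeval u p - aeval v p ∈ I := by
  rw [aeval_eq_sum_range, aeval_eq_sum_range, ← Finset.sum_sub_distrib]
  refine Submodule.sum_mem I fun n _ => ?_
  rw [← smul_sub]
  exact I.smul_mem _ (pow_sub_pow_mem_of_sub_mem I hI_left hI_right huv n)

section CStarAlgebra

variable {A : Type*} [CStarAlgebra A]

lemma abs_le_norm_of_mem_spectrum {a : A} {t : ℝ} (ht : t ∈ spectrum ℝ a) : |t| ≤ ‖a‖ := by
  obtain _ | _ := subsingleton_or_nontrivial A
  · simp [spectrum.of_subsingleton] at ht
  exact spectrum.norm_le_norm_of_mem ht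

lemma norm_cfc_sub_aeval_le {w : A} (hw : IsSelfAdjoint w) {g : ℝ → ℝ} (hg : Continuous g)
    {p : ℝ[X]} {M ε : ℝ} (hε : 0 ≤ ε) (hwM : ‖w‖ ≤ M)
    (hp : ∀ x ∈ Set.Icc (-M) M, |p.eval x - g x| ≤ ε) :
    ‖cfc g w - aeval w p‖ ≤ ε := by
  rw [← cfc_polynomial p w, ← cfc_sub g _ w]
  refine norm_cfc_le hε fun x hx => ?_
  have hxM : |x| ≤ M := (abs_le_norm_of_mem_spectrum hx).trans hwM
  rw [Real.norm_eq_abs, abs_sub_comm]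
  exact hp x (abs_le.mp hxM)

lemma cfc_sub_cfc_mem_of_sub_mem (I : Submodule ℂ A) (hI_closed : IsClosed (I : Set A))
    (hI_left : ∀ x ∈ I, ∀ y : A, y * x ∈ I) (hI_right : ∀ x ∈ I, ∀ y : A, x * y ∈ I)
    {u v : A} (hu : IsSelfAdjoint u) (hv : IsSelfAdjoint v) (huv : u - v ∈ I)
    {g : ℝ → ℝ} (hg : Continuous g) :
    cfc g u - cfc g v ∈ I := by
  rw [← SetLike.mem_coe, ← hI_closed.closure_eq, Metric.mem_closure_iff]
  intro ε hε
  set M := max ‖u‖ ‖v‖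
  obtain ⟨p, hp⟩ := exists_polynomial_near_of_continuousOn (-M) M g hg.continuousOn (ε / 3)
    (by positivity)
  have hp' : ∀ x ∈ Set.Icc (-M) M, |p.eval x - g x| ≤ ε / 3 := fun x hx => (hp x hx).le
  have hup := norm_cfc_sub_aeval_le hu hg (by positivity) (le_max_left _ _) hp'
  have hvp := norm_cfc_sub_aeval_le hv hg (by positivity) (le_max_right _ _) hp'
  refine ⟨aeval u p - aeval v p,
    aeval_sub_aeval_mem_of_sub_mem (I.restrictScalars ℝ) hI_left hI_right huv p, ?_⟩
  calc dist (cfc g u - cfc g v) (aeval u p - aeval v p)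
      = ‖(cfc g u - aeval u p) - (cfc g v - aeval v p)‖ := by
        rw [dist_eq_norm, sub_sub_sub_comm]
    _ ≤ ‖cfc g u - aeval u p‖ + ‖cfc g v - aeval v p‖ := norm_sub_le _ _
    _ < ε := by linarith

lemma cfc_mem_of_mem (I : Submodule ℂ A) (hI_closed : IsClosed (I : Set A))
    (hI_left : ∀ x ∈ I, ∀ y : A, y * x ∈ I) (hI_right : ∀ x ∈ I, ∀ y : A, x * y ∈ I)
    {z : A} (hz : IsSelfAdjoint z) (hzI : z ∈ I) {g : ℝ → ℝ} (hg : Continuous g)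
    (hg0 : g 0 = 0) :
    cfc g z ∈ I := by
  simpa [hg0] using cfc_sub_cfc_mem_of_sub_mem I hI_closed hI_left hI_right hz (.zero A)
    (by simpa using hzI) hg

lemma norm_sub_mul_cfc_ramp_sq_le (y : A) {r : ℝ} (hr : 0 < r) :
    ‖y - y * cfc (ramp 0 r) (star y * y)‖ ^ 2 ≤ r := by
  set z := star y * y
  have hu : y - y * cfc (ramp 0 r) z = y * cfc (fun t => 1 - ramp 0 r t) z := by
    rw [cfc_sub (fun _ => 1) (ramp 0 r) z, cfc_const_one ℝ z, mul_sub, mul_one]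
  have huzu : star (y * cfc (fun t => 1 - ramp 0 r t) z) * (y * cfc (fun t => 1 - ramp 0 r t) z) =
      cfc (fun t => (1 - ramp 0 r t) * t * (1 - ramp 0 r t)) z := by
    rw [cfc_mul _ _ z, cfc_mul _ _ z, cfc_id' ℝ z, star_mul,
      (IsSelfAdjoint.cfc (f := fun t => 1 - ramp 0 r t) (a := z)).star_eq]
    simp only [z, mul_assoc]
  rw [hu, sq, ← CStarRing.norm_star_mul_self, huzu]
  refine norm_cfc_le hr.le fun t ht => ?_
  have ht0 : 0 ≤ t := spectrum_star_mul_self_nonneg t ht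
  rcases le_or_gt t r with htr | hrt
  · have h0 := ramp_nonneg 0 r t
    have h1 := ramp_le_one 0 r t
    rw [Real.norm_eq_abs, abs_of_nonneg (by positivity)]
    nlinarith [mul_nonneg ht0 (mul_nonneg h0 (by linarith : (0 : ℝ) ≤ 2 - ramp 0 r t))]
  · simp [ramp_eq_one_of_le hr hrt.le, hr.le]

lemma star_mem_of_mem (I : Submodule ℂ A) (hI_closed : IsClosed (I : Set A))
    (hI_left : ∀ x ∈ I, ∀ y : A, y * x ∈ I) (hI_right : ∀ x ∈ I, ∀ y : A, x * y ∈ I)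
    {x : A} (hx : x ∈ I) : star x ∈ I := by
  rw [← SetLike.mem_coe, ← hI_closed.closure_eq, Metric.mem_closure_iff]
  intro ε hε
  have hr : 0 < ε ^ 2 / 2 := by positivity
  have hmem : star x * cfc (ramp 0 (ε ^ 2 / 2)) (star (star x) * star x) ∈ I := by
    refine hI_left _ (cfc_mem_of_mem I hI_closed hI_left hI_right (.star_mul_self _) ?_
      (continuous_ramp _ _) (ramp_eq_zero_of_le hr le_rfl)) _
    rw [star_star]
    exact hI_right x hx _
  refine ⟨_, hmem, ?_⟩
  have := norm_sub_mul_cfc_ramp_sq_le (star x) hr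
  rw [dist_eq_norm]
  exact lt_of_pow_lt_pow_left₀ 2 hε.le (by linarith)

lemma star_mul_self_sub_mem (I : Submodule ℂ A) (hI_closed : IsClosed (I : Set A))
    (hI_left : ∀ x ∈ I, ∀ y : A, y * x ∈ I) (hI_right : ∀ x ∈ I, ∀ y : A, x * y ∈ I)
    (a : A) {b : A} (hb : b ∈ I) : star a * a - star (a - b) * (a - b) ∈ I := by
  have e : star a * a - star (a - b) * (a - b) = star a * b + star b * (a - b) := by
    rw [star_sub]
    noncomm_ring
  rw [e]
  exact I.add_mem (hI_left b hb _)
    (hI_right _ (star_mem_of_mem I hI_closed hI_left hI_right hb) _)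

lemma norm_cfc_ramp_le_one (α β : ℝ) (u : A) : ‖cfc (ramp α β) u‖ ≤ 1 :=
  norm_cfc_le zero_le_one fun t _ => by
    rw [Real.norm_eq_abs, abs_of_nonneg (ramp_nonneg α β t)]
    exact ramp_le_one α β t

lemma cfc_ramp_mem (I : Submodule ℂ A) (hI_closed : IsClosed (I : Set A))
    (hI_left : ∀ x ∈ I, ∀ y : A, y * x ∈ I) (hI_right : ∀ x ∈ I, ∀ y : A, x * y ∈ I)
    {u v : A} (hu : IsSelfAdjoint u) (hv : IsSelfAdjoint v) (huv : u - v ∈ I) {α β : ℝ}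
    (hvα : ‖v‖ ≤ α) (hαβ : α < β) :
    cfc (ramp α β) u ∈ I := by
  have hv0 : cfc (ramp α β) v = 0 := by
    rw [← cfc_zero ℝ v]
    refine cfc_congr fun t ht => ramp_eq_zero_of_le hαβ ?_
    exact (le_abs_self t).trans ((abs_le_norm_of_mem_spectrum ht).trans hvα)
  simpa [hv0] using
    cfc_sub_cfc_mem_of_sub_mem I hI_closed hI_left hI_right hu hv huv (continuous_ramp α β)

lemma norm_sub_smul_cfc_ramp_le {h : A} (hh : IsSelfAdjoint h)
    (hspec : ∀ t ∈ spectrum ℝ h, 0 ≤ t) {α β : ℝ} (hαβ : α < β) (hhβ : ‖h‖ ≤ 2 * β) :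
    ‖h - (‖h‖ - β) • cfc (ramp α β) h‖ ≤ β := by
  have e : h - (‖h‖ - β) • cfc (ramp α β) h = cfc (fun t => t - (‖h‖ - β) * ramp α β t) h := by
    rw [cfc_sub (fun t => t) _ h, cfc_id' ℝ h, cfc_const_mul _ _ h]
  rw [e]
  refine norm_cfc_le (by linarith [norm_nonneg h]) fun t ht => ?_
  have ht0 := hspec t ht
  have htH : t ≤ ‖h‖ := (le_abs_self t).trans (abs_le_norm_of_mem_spectrum ht)
  rw [Real.norm_eq_abs, abs_le]
  rcases lt_or_ge t β with htβ | hβt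
  · have h0 := ramp_nonneg α β t
    have h1 := ramp_le_one α β t
    constructor <;> nlinarith
  · rw [ramp_eq_one_of_le hαβ hβt]
    constructor <;> linarith

end CStarAlgebra

lemma one_le_re_apply_of_norm_sub_smul_le {E : Type*} [SeminormedAddCommGroup E]
    [NormedSpace ℂ E] (ψ : E →L[ℂ] ℂ) (hψ : ‖ψ‖ ≤ 1) {x y : E} {r s : ℝ} (hs : 0 < s)
    (hx : ψ x = r) (hxy : ‖x - (s : ℂ) • y‖ ≤ r - s) :
    1 ≤ (ψ y).re := by
  have key : r - s * (ψ y).re ≤ r - s :=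
    calc r - s * (ψ y).re = (ψ (x - (s : ℂ) • y)).re := by simp [hx]
      _ ≤ ‖ψ (x - (s : ℂ) • y)‖ := Complex.re_le_norm _
      _ ≤ ‖ψ‖ * ‖x - (s : ℂ) • y‖ := ψ.le_opNorm _
      _ ≤ 1 * (r - s) := mul_le_mul hψ hxy (norm_nonneg _) zero_le_one
      _ = r - s := one_mul _
  nlinarith

lemma ContinuousLinearMap.norm_comp_subtypeL_eq_of_le_norm_apply {𝕜 E F : Type*}
    [NontriviallyNormedField 𝕜] [SeminormedAddCommGroup E] [NormedSpace 𝕜 E]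
    [SeminormedAddCommGroup F] [NormedSpace 𝕜 F] (ψ : E →L[𝕜] F) (I : Submodule 𝕜 E) {c : E}
    (hc : c ∈ I) (hc1 : ‖c‖ ≤ 1) (hψc : ‖ψ‖ ≤ ‖ψ c‖) :
    ‖ψ.comp I.subtypeL‖ = ‖ψ‖ := by
  refine le_antisymm ?_ ?_
  · calc ‖ψ.comp I.subtypeL‖ ≤ ‖ψ‖ * ‖I.subtypeL‖ := ψ.opNorm_comp_le _
      _ ≤ ‖ψ‖ * 1 := by gcongr; exact I.norm_subtypeL_le
      _ = ‖ψ‖ := mul_one _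
  · calc ‖ψ‖ ≤ ‖ψ c‖ := hψc
      _ = ‖ψ.comp I.subtypeL ⟨c, hc⟩‖ := rfl
      _ ≤ ‖ψ.comp I.subtypeL‖ * ‖(⟨c, hc⟩ : I)‖ := le_opNorm _ _
      _ ≤ ‖ψ.comp I.subtypeL‖ := mul_le_of_le_one_right (norm_nonneg _) hc1

theorem norm_restriction_to_ideal_eq_one_general
    {A : Type*} [NormedRing A] [StarRing A] [CStarRing A]
    [NormedAlgebra ℂ A] [StarModule ℂ A] [CompleteSpace A]
    (I : Submodule ℂ A) (hI_closed : IsClosed (I : Set A))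
    (hI_left : ∀ x ∈ I, ∀ y : A, y * x ∈ I)
    (hI_right : ∀ x ∈ I, ∀ y : A, x * y ∈ I)
    (a : A) (hdist : Metric.infDist a (I : Set A) < ‖a‖)
    (ψ : A →L[ℂ] ℂ) (hψ : ‖ψ‖ = 1)
    (hψa : ψ (star a * a) = ((‖a‖ ^ 2 : ℝ) : ℂ)) :
    ‖ψ.comp I.subtypeL‖ = 1 := by
  let _ : CStarAlgebra A := {}
  set h := star a * a
  have hh : ‖h‖ = ‖a‖ ^ 2 := by rw [CStarRing.norm_star_mul_self, sq]
  set β := (infDist a I ^ 2 + ‖h‖) / 2 with hβ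
  have hdist_sq : infDist a I ^ 2 < ‖h‖ := hh ▸ pow_lt_pow_left₀ hdist infDist_nonneg two_ne_zero
  obtain ⟨b, hbI, hab⟩ : ∃ b ∈ I, dist a b < √β := (infDist_lt_iff ⟨0, I.zero_mem⟩).mp
    ((Real.lt_sqrt infDist_nonneg).mpr (by linarith))
  set k := star (a - b) * (a - b)
  have hk : ‖k‖ < β := by
    rw [CStarRing.norm_star_mul_self, ← sq]
    exact (Real.lt_sqrt (norm_nonneg _)).mp (by rwa [dist_eq_norm] at hab)
  have hcI := cfc_ramp_mem I hI_closed hI_left hI_right (.star_mul_self a) (.star_mul_self _)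
    (star_mul_self_sub_mem I hI_closed hI_left hI_right a hbI) le_rfl hk
  refine (ψ.norm_comp_subtypeL_eq_of_le_norm_apply I hcI (norm_cfc_ramp_le_one _ _ _) ?_).trans hψ
  rw [hψ]
  refine (one_le_re_apply_of_norm_sub_smul_le ψ hψ.le (r := ‖h‖) (s := ‖h‖ - β) (by linarith)
    (by rw [hψa, hh]) ?_).trans (Complex.re_le_norm _)
  rw [Complex.coe_smul, sub_sub_cancel]
  exact norm_sub_smul_cfc_ramp_le (.star_mul_self a) spectrum_star_mul_self_nonneg hk
    (by linarith [sq_nonneg (infDist a I)])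

/-- Let `I` be a closed two-sided ideal of a complex C*-algebra `A` and `a ≠ 0` with
`dist(a, I) < ‖a‖`.  If `ψ` is a norm-one bounded linear functional on `A` with
`ψ(a* a) = ‖a‖²`, then the restriction of `ψ` to `I` also has norm one. -/
theorem norm_restriction_to_ideal_eq_one
    {A : Type*} [NormedRing A] [StarRing A] [CStarRing A]
    [NormedAlgebra ℂ A] [StarModule ℂ A] [CompleteSpace A]
    (I : Submodule ℂ A) (hI_closed : IsClosed (I : Set A))
    (hI_left : ∀ x ∈ I, ∀ y : A, y * x ∈ I)
    (hI_right : ∀ x ∈ I, ∀ y : A, x * y ∈ I)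
    (a : A) (ha : a ≠ 0) (hdist : Metric.infDist a (I : Set A) < ‖a‖)
    (ψ : A →L[ℂ] ℂ) (hψ : ‖ψ‖ = 1)
    (hψa : ψ (star a * a) = ((‖a‖ ^ 2 : ℝ) : ℂ)) :
    ‖ψ.comp I.subtypeL‖ = 1 :=
  norm_restriction_to_ideal_eq_one_general I hI_closed hI_left hI_right a hdist ψ hψ hψa
end

section
/- Let H be a complex Hilbert space and let A ∈ B(H) be nonzero. Let H₀ = { u ∈ H : ‖A u‖ = ‖A‖·‖u‖ } (which equals the eigenspace ker(A* A − ‖A‖² I) and is hence a closed subspace). If H₀ is finite dimensional and nonzero, and sup{ ‖A x‖ : x ∈ H, ‖x‖ = 1, x ⊥ H₀ } < ‖A‖, then dist(A, K(H)) < ‖A‖, where K(H) denotes the compact operators on H. -/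
/-! Projecting onto the finite-dimensional space `H₀` gives the compact operator `A P_{H₀}`, and
`A - A P_{H₀} = A P_{H₀ᗮ}` has norm at most the supremum of `‖A x‖` over unit vectors `x ⊥ H₀`. -/

open Metric

section

variable {𝕜 E F : Type*} [RCLike 𝕜] [NormedAddCommGroup E] [InnerProductSpace 𝕜 E]
  [NormedAddCommGroup F] [NormedSpace 𝕜 F]

lemma ContinuousLinearMap.sub_comp_starProjection (A : E →L[𝕜] F) (K : Submodule 𝕜 E)
    [K.HasOrthogonalProjection] :
    A - A ∘L K.starProjection = (A ∘L Kᗮ.subtypeL) ∘L Kᗮ.orthogonalProjectionOnto := by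
  ext x
  simp [map_sub]

lemma ContinuousLinearMap.norm_sub_comp_starProjection_le (A : E →L[𝕜] F)
    (K : Submodule 𝕜 E) [K.HasOrthogonalProjection] :
    ‖A - A ∘L K.starProjection‖ ≤ ‖A ∘L Kᗮ.subtypeL‖ := by
  rw [A.sub_comp_starProjection K]
  exact (ContinuousLinearMap.opNorm_comp_le _ _).trans <|
    mul_le_of_le_one_right (norm_nonneg _) Kᗮ.orthogonalProjectionOnto_norm_le

lemma infDist_isCompactOperator_le_norm_comp_orthogonal (A : E →L[𝕜] F) (K : Submodule 𝕜 E)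
    [FiniteDimensional 𝕜 K] :
    infDist A {T : E →L[𝕜] F | IsCompactOperator T} ≤ ‖A ∘L Kᗮ.subtypeL‖ := by
  have hcompact : IsCompactOperator (A ∘L K.starProjection) :=
    (isCompactOperator_of_locallyCompactSpace_dom K.orthogonalProjectionOnto).clm_comp
      (A ∘L K.subtypeL)
  calc infDist A {T : E →L[𝕜] F | IsCompactOperator T}
      ≤ dist A (A ∘L K.starProjection) := infDist_le_dist_of_mem hcompact
    _ = ‖A - A ∘L K.starProjection‖ := dist_eq_norm _ _
    _ ≤ ‖A ∘L Kᗮ.subtypeL‖ := A.norm_sub_comp_starProjection_le K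

end

theorem infDist_compact_lt_of_finiteDimensional_norming_space_general
    {H : Type*} [NormedAddCommGroup H] [InnerProductSpace ℂ H]
    (A : H →L[ℂ] H)
    (H₀ : Submodule ℂ H)
    (hfin : FiniteDimensional ℂ H₀)
    (hsup : sSup {r : ℝ | ∃ x : H, ‖x‖ = 1 ∧ (∀ u ∈ H₀, (inner ℂ x u : ℂ) = 0) ∧
      r = ‖A x‖} < ‖A‖) :
    Metric.infDist A {T : H →L[ℂ] H | IsCompactOperator T} < ‖A‖ := by
  set S := {r : ℝ | ∃ x : H, ‖x‖ = 1 ∧ (∀ u ∈ H₀, (inner ℂ x u : ℂ) = 0) ∧ r = ‖A x‖}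
  have hbdd : BddAbove S := ⟨‖A‖, by
    rintro r ⟨x, hx, -, rfl⟩
    simpa [hx] using A.le_opNorm x⟩
  have hS_nonneg : 0 ≤ sSup S := Real.sSup_nonneg <| by
    rintro r ⟨x, -, -, rfl⟩
    exact norm_nonneg _
  have hnorm_le : ‖A ∘L H₀ᗮ.subtypeL‖ ≤ sSup S :=
    ContinuousLinearMap.opNorm_le_of_unit_norm hS_nonneg fun x hx =>
      le_csSup hbdd ⟨x, hx, fun _ hu => H₀.inner_left_of_mem_orthogonal hu x.2, rfl⟩
  exact (infDist_isCompactOperator_le_norm_comp_orthogonal A H₀).trans_lt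
    (hnorm_le.trans_lt hsup)

/-- Let `0 ≠ A ∈ B(H)` and let `H₀` be the subspace `{u : ‖A u‖ = ‖A‖ ‖u‖}`
(the eigenspace `ker(A* A - ‖A‖² I)`).  If `H₀` is finite dimensional and nonzero,
and `sup {‖A x‖ : ‖x‖ = 1, x ⊥ H₀} < ‖A‖`, then `dist(A, K(H)) < ‖A‖`. -/
theorem infDist_compact_lt_of_finiteDimensional_norming_space
    {H : Type*} [NormedAddCommGroup H] [InnerProductSpace ℂ H] [CompleteSpace H]
    (A : H →L[ℂ] H) (hA : A ≠ 0)
    (H₀ : Submodule ℂ H)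
    (hH₀ : (H₀ : Set H) = {u : H | ‖A u‖ = ‖A‖ * ‖u‖})
    (hfin : FiniteDimensional ℂ H₀) (hne : H₀ ≠ ⊥)
    (hsup : sSup {r : ℝ | ∃ x : H, ‖x‖ = 1 ∧ (∀ u ∈ H₀, (inner ℂ x u : ℂ) = 0) ∧
      r = ‖A x‖} < ‖A‖) :
    Metric.infDist A {T : H →L[ℂ] H | IsCompactOperator T} < ‖A‖ :=
  infDist_compact_lt_of_finiteDimensional_norming_space_general A H₀ hfin hsup
end

section
/- Let H be a complex Hilbert space and let C₁(H) be the space of trace-class operators on H with the trace norm ‖·‖₁. For any unit vectors u, v ∈ H, the rank-one operator u ⊗ v̄ (defined by w ↦ ⟨v, w⟩ u) is an extreme point of the closed unit ball of C₁(H). -/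
/-- The closed unit ball of the trace class `C₁(H)`, described inside `B(H)` via the
standard characterization of the trace norm:
`‖T‖₁ = sup { Σ |⟨e i, T (f i)⟩| : (e i), (f i) finite orthonormal families }`,
so that `‖T‖₁ ≤ 1` iff every such finite sum is at most `1`. -/
def traceClassUnitBall (H : Type*) [NormedAddCommGroup H] [InnerProductSpace ℂ H] :
    Set (H →L[ℂ] H) :=
  {T : H →L[ℂ] H | ∀ (n : ℕ) (e f : Fin n → H), Orthonormal ℂ e → Orthonormal ℂ f →
    ∑ i, ‖(inner ℂ (e i) (T (f i)) : ℂ)‖ ≤ 1}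

/-!
By Bessel's inequality and Cauchy–Schwarz, `u ⊗ v̄` lies in the unit ball. Testing the trace
norm on single pairs of unit vectors shows that every `S` in the unit ball has operator norm at
most `1`, so `S ↦ ⟪u, S v⟫` maps the ball into the closed unit disc and sends `u ⊗ v̄` to the
extreme point `1`. It remains to see that `⟪u, S v⟫ = 1` forces `S = u ⊗ v̄`.
The equality case of Cauchy–Schwarz gives `S v = u` and, applied to the adjoint, `S† u = v`,
so `S` maps `v^⊥` into `u^⊥`. Finally, for `x ⊥ v`, testing the trace norm on the orthonormal
pairs `(u, S x / ‖S x‖)` and `(v, x / ‖x‖)` gives `1 + ‖S x‖ / ‖x‖ ≤ 1`, so `S x = 0`.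
-/

open scoped InnerProductSpace

lemma mem_extremePoints_of_linearMap {𝕜 E F : Type*} [Ring 𝕜] [PartialOrder 𝕜] [IsOrderedRing 𝕜]
    [AddCommGroup E] [Module 𝕜 E] [AddCommGroup F] [Module 𝕜 F]
    {φ : E →ₗ[𝕜] F} {C : Set E} {D : Set F} {x : E}
    (hx : x ∈ C) (hCD : Set.MapsTo φ C D) (hφx : φ x ∈ D.extremePoints 𝕜)
    (hfiber : ∀ y ∈ C, φ y = φ x → y = x) : x ∈ C.extremePoints 𝕜 := by
  refine mem_extremePoints.2 ⟨hx, fun y hy z hz hxyz => ?_⟩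
  have hφxyz : φ x ∈ openSegment 𝕜 (φ y) (φ z) :=
    (image_openSegment 𝕜 φ.toAffineMap y z).subset ⟨x, hxyz, rfl⟩
  obtain ⟨hφy, hφz⟩ := (mem_extremePoints.1 hφx).2 _ (hCD hy) _ (hCD hz) hφxyz
  exact ⟨hfiber y hy hφy, hfiber z hz hφz⟩

section traceClassUnitBall

variable {H : Type*} [NormedAddCommGroup H] [InnerProductSpace ℂ H] {S : H →L[ℂ] H}

lemma rankOne_mem_traceClassUnitBall {u v : H} (hu : ‖u‖ ≤ 1) (hv : ‖v‖ ≤ 1) :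
    (innerSL ℂ v).smulRight u ∈ traceClassUnitBall H := by
  intro n e f he hf
  have bessel : ∀ {g : Fin n → H}, Orthonormal ℂ g → ∀ w : H, ‖w‖ ≤ 1 →
      √(∑ i, ‖⟪g i, w⟫_ℂ‖ ^ 2) ≤ 1 := fun hg w hw =>
    Real.sqrt_le_one.2 ((hg.sum_inner_products_le w).trans (pow_le_one₀ (norm_nonneg w) hw))
  calc ∑ i, ‖⟪e i, (innerSL ℂ v).smulRight u (f i)⟫_ℂ‖
      = ∑ i, ‖⟪f i, v⟫_ℂ‖ * ‖⟪e i, u⟫_ℂ‖ := by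
        simp only [ContinuousLinearMap.smulRight_apply, innerSL_apply_apply, inner_smul_right,
          norm_mul, norm_inner_symm]
    _ ≤ √(∑ i, ‖⟪f i, v⟫_ℂ‖ ^ 2) * √(∑ i, ‖⟪e i, u⟫_ℂ‖ ^ 2) :=
        Real.sum_mul_le_sqrt_mul_sqrt _ _ _
    _ ≤ 1 := mul_le_one₀ (bessel hf v hv) (Real.sqrt_nonneg _) (bessel he u hu)

lemma norm_inner_apply_le_one (hS : S ∈ traceClassUnitBall H) {e f : H} (he : ‖e‖ = 1)
    (hf : ‖f‖ = 1) : ‖⟪e, S f⟫_ℂ‖ ≤ 1 := by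
  simpa using hS 1 ![e] ![f] (by simpa) (by simpa)

lemma norm_inner_apply_add_norm_inner_apply_le_one (hS : S ∈ traceClassUnitBall H)
    {e₁ e₂ f₁ f₂ : H} (he : Orthonormal ℂ ![e₁, e₂]) (hf : Orthonormal ℂ ![f₁, f₂]) :
    ‖⟪e₁, S f₁⟫_ℂ‖ + ‖⟪e₂, S f₂⟫_ℂ‖ ≤ 1 := by
  simpa [Fin.sum_univ_two] using hS 2 _ _ he hf

lemma opNorm_le_one_of_mem_traceClassUnitBall (hS : S ∈ traceClassUnitBall H) : ‖S‖ ≤ 1 :=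
  ContinuousLinearMap.opNorm_le_of_re_inner_le zero_le_one fun x y hx hy =>
    (RCLike.re_le_norm _).trans <|
      norm_inner_symm (𝕜 := ℂ) (S x) y ▸ norm_inner_apply_le_one hS hy hx

lemma apply_eq_of_inner_apply_eq_one (hS : ‖S‖ ≤ 1) {u v : H} (hu : ‖u‖ = 1) (hv : ‖v‖ = 1)
    (h : ⟪u, S v⟫_ℂ = 1) : S v = u := by
  have hSv : ‖S v‖ ≤ 1 := by simpa [hv] using S.le_of_opNorm_le hS v
  have h1 : (1 : ℝ) ≤ ‖S v‖ := by simpa [h, hu] using norm_inner_le_norm (𝕜 := ℂ) u (S v)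
  exact ((inner_eq_one_iff_of_norm_eq_one hu (hSv.antisymm h1)).1 h).symm

variable [CompleteSpace H] {u v : H}

lemma inner_apply_eq_zero_of_inner_eq_zero (hS : ‖S‖ ≤ 1) (hu : ‖u‖ = 1) (hv : ‖v‖ = 1)
    (h : ⟪u, S v⟫_ℂ = 1) {x : H} (hx : ⟪v, x⟫_ℂ = 0) : ⟪u, S x⟫_ℂ = 0 := by
  have hadj : S.adjoint u = v := by
    refine apply_eq_of_inner_apply_eq_one (by rwa [LinearIsometryEquiv.norm_map]) hv hu ?_
    rw [ContinuousLinearMap.adjoint_inner_right, ← inner_conj_symm, h, map_one]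
  rw [← ContinuousLinearMap.adjoint_inner_left, hadj, hx]

lemma apply_eq_zero_of_inner_eq_zero (hS : S ∈ traceClassUnitBall H) (hu : ‖u‖ = 1)
    (hv : ‖v‖ = 1) (h : ⟪u, S v⟫_ℂ = 1) {x : H} (hx : ⟪v, x⟫_ℂ = 0) : S x = 0 := by
  by_contra hSx
  have hx0 : x ≠ 0 := by rintro rfl; simp at hSx
  set e : H := (‖S x‖⁻¹ : ℂ) • S x
  set f : H := (‖x‖⁻¹ : ℂ) • x
  have hue : ⟪u, e⟫_ℂ = 0 := by
    simp [e,
      inner_apply_eq_zero_of_inner_eq_zero (opNorm_le_one_of_mem_traceClassUnitBall hS) hu hv h hx]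
  have hvf : ⟪v, f⟫_ℂ = 0 := by simp [f, hx]
  have he1 : ‖e‖ = 1 := norm_smul_inv_norm hSx
  have hf1 : ‖f‖ = 1 := norm_smul_inv_norm hx0
  have he : Orthonormal ℂ ![u, e] := by simp [hu, hue, he1]
  have hf : Orthonormal ℂ ![v, f] := by simp [hv, hvf, hf1]
  have hef : ⟪e, S f⟫_ℂ ≠ 0 := by simp [e, f, hSx, hx0]
  have hpair := norm_inner_apply_add_norm_inner_apply_le_one hS he hf
  rw [h, norm_one, add_le_iff_nonpos_right] at hpair
  exact hef (norm_le_zero_iff.1 hpair)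

lemma eq_rankOne_of_inner_apply_eq_one (hS : S ∈ traceClassUnitBall H) (hu : ‖u‖ = 1)
    (hv : ‖v‖ = 1) (h : ⟪u, S v⟫_ℂ = 1) : S = (innerSL ℂ v).smulRight u := by
  ext w
  have hSv := apply_eq_of_inner_apply_eq_one (opNorm_le_one_of_mem_traceClassUnitBall hS) hu hv h
  have hw := apply_eq_zero_of_inner_eq_zero hS hu hv h (x := w - ⟪v, w⟫_ℂ • v)
    (by simp [inner_self_eq_norm_sq_to_K, hv])
  rw [map_sub, map_smul, hSv, sub_eq_zero] at hw
  simpa using hw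

end traceClassUnitBall

/-- For unit vectors `u, v ∈ H`, the rank-one operator `u ⊗ v̄ : w ↦ ⟨v, w⟩ u` is an
extreme point of the closed unit ball of the trace class `C₁(H)` (with the trace
norm). -/
theorem rankOne_extremePoint_traceClass
    {H : Type*} [NormedAddCommGroup H] [InnerProductSpace ℂ H] [CompleteSpace H]
    (u v : H) (hu : ‖u‖ = 1) (hv : ‖v‖ = 1) :
    ((innerSL ℂ v).smulRight u : H →L[ℂ] H) ∈
      Set.extremePoints ℝ (traceClassUnitBall H) := by
  let φ : (H →L[ℂ] H) →ₗ[ℝ] ℂ :=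
    ((innerSL ℂ u).comp (ContinuousLinearMap.apply ℂ H v)).toLinearMap.restrictScalars ℝ
  have hφ : ∀ S, φ S = ⟪u, S v⟫_ℂ := fun S => rfl
  have hφT : φ ((innerSL ℂ v).smulRight u) = 1 := by simp [hφ, hu, hv]
  refine mem_extremePoints_of_linearMap (φ := φ) (D := Metric.closedBall 0 1)
    (rankOne_mem_traceClassUnitBall hu.le hv.le) (fun S hS => ?_) ?_
    (fun S hS hST => eq_rankOne_of_inner_apply_eq_one hS hu hv (hST.trans hφT))
  · simpa [hφ] using norm_inner_apply_le_one hS hu hv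
  · exact hφT ▸ StrictConvexSpace.sphere_subset_extremePoints_closedBall 0 one_ne_zero (by simp)
end
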